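/- arXiv:2009.14816 — 8 statements merged into one kernel-verified Lean document; each statement's English description precedes it below -/
import Mathlib

section
/- Fix ν ∈ (1/2, 1). If x₁, x₂ : [0,T] → [0,∞) both solve x' = x^{1/ν-1} with x(0) = 0, then E₁(t) := |x₁(t) - x₂(t)| satisfies E₁(t) ≤ C_ν · t^{ν/(2ν-1)} for all t ∈ [0,T], where C_ν depends only on ν. In particular one can take C_ν such that the bound follows from integrating dE₁/dt ≤ C'_ν E₁^{1/ν - 1}. -/
open Set Filter Topology

/-! Every solution of `x' = x ^ α`, `x 0 = 0` with `0 < α < 1` stays below `t ^ p`, where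
`p = (1 - α)⁻¹` (here `p = ν / (2ν - 1)`). Indeed the barrier `B t = (t - s + δ) ^ p` satisfies
`B' = p B ^ α > B ^ α` wherever `B > 0`, so a solution lying below `B` at a time `s > 0` can never
cross it; since `x s → 0` as `s → 0`, one may take `s` and then `δ` arbitrarily small. As both
solutions are nonnegative, `|x₁ t - x₂ t| ≤ max (x₁ t) (x₂ t) ≤ t ^ p`. -/

section RpowODE

variable {α T : ℝ} {x : ℝ → ℝ}

theorem le_rpow_of_hasDerivAt_rpow_of_le {s δ : ℝ} (hα0 : 0 < α) (hα1 : α < 1) (hδ : 0 < δ)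
    (hc : ContinuousOn x (Icc s T)) (hd : ∀ t ∈ Ico s T, HasDerivAt x (x t ^ α) t)
    (hs : x s ≤ δ ^ (1 - α)⁻¹) :
    ∀ t ∈ Icc s T, x t ≤ (t - s + δ) ^ (1 - α)⁻¹ := by
  set p := (1 - α)⁻¹
  have hp : 1 < p := one_lt_inv_iff₀.2 ⟨by linarith, by linarith⟩
  have hpα : p * α = p - 1 := by
    have : 1 - α ≠ 0 := by linarith
    simp only [p]; field_simp; ring
  refine image_le_of_deriv_right_lt_deriv_boundary hc (fun t ht => (hd t ht).hasDerivWithinAt)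
    (by simpa using hs) (B' := fun y => p * (y - s + δ) ^ (p - 1)) (fun y => ?_) ?_
  · simpa using ((hasDerivAt_id y).sub_const s |>.add_const δ).rpow_const (Or.inr hp.le)
  · intro t ht hxt
    have hpos : 0 < t - s + δ := by linarith [ht.1]
    calc x t ^ α = ((t - s + δ) ^ p) ^ α := by rw [hxt]
      _ = (t - s + δ) ^ (p - 1) := by rw [← Real.rpow_mul hpos.le, hpα]
      _ < p * (t - s + δ) ^ (p - 1) := lt_mul_left (by positivity) hp

theorem le_rpow_of_hasDerivAt_rpow (hα0 : 0 < α) (hα1 : α < 1) (hT : 0 < T)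
    (hc : ContinuousOn x (Icc 0 T)) (h0 : x 0 = 0)
    (hd : ∀ t ∈ Ioo 0 T, HasDerivAt x (x t ^ α) t) :
    ∀ t ∈ Icc 0 T, x t ≤ t ^ (1 - α)⁻¹ := by
  have hp : 0 < (1 - α)⁻¹ := inv_pos.2 (by linarith)
  rintro t ⟨ht0, htT⟩
  rcases ht0.eq_or_lt with rfl | ht
  · simp [h0, Real.zero_rpow hp.ne']
  have hx0 : Tendsto x (𝓝[>] 0) (𝓝 0) := by
    simpa only [h0] using
      ((hc 0 ⟨le_rfl, hT.le⟩).mono_of_mem_nhdsWithin (Icc_mem_nhdsGT hT)).tendsto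
  have hlim : Tendsto (fun δ => (t + δ) ^ (1 - α)⁻¹) (𝓝[>] 0) (𝓝 (t ^ (1 - α)⁻¹)) := by
    simpa using ((continuous_const_add t).tendsto 0).mono_left nhdsWithin_le_nhds
      |>.rpow_const (Or.inr hp.le)
  refine ge_of_tendsto hlim (eventually_nhdsWithin_of_forall fun δ (hδ : 0 < δ) => ?_)
  have hδp : 0 < δ ^ (1 - α)⁻¹ := by positivity
  obtain ⟨s, hxs, hs⟩ :=
    ((hx0.eventually (gt_mem_nhds hδp)).and (Ioo_mem_nhdsGT ht)).exists
  calc x t ≤ (t - s + δ) ^ (1 - α)⁻¹ :=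
        le_rpow_of_hasDerivAt_rpow_of_le hα0 hα1 hδ (hc.mono (Icc_subset_Icc hs.1.le le_rfl))
          (fun y hy => hd y ⟨hs.1.trans_le hy.1, hy.2⟩) hxs.le t ⟨hs.2.le, htT⟩
    _ ≤ (t + δ) ^ (1 - α)⁻¹ := by gcongr <;> linarith [hs.1, hs.2]

end RpowODE

theorem energy_E1_growth (ν : ℝ) (hν1 : 1/2 < ν) (hν2 : ν < 1) :
    ∃ C > 0, ∀ (T : ℝ) (x₁ x₂ : ℝ → ℝ), 0 < T →
      ContinuousOn x₁ (Icc 0 T) → ContinuousOn x₂ (Icc 0 T) →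
      (∀ t ∈ Icc (0:ℝ) T, 0 ≤ x₁ t) → (∀ t ∈ Icc (0:ℝ) T, 0 ≤ x₂ t) →
      x₁ 0 = 0 → x₂ 0 = 0 →
      (∀ t ∈ Ioo (0:ℝ) T, HasDerivAt x₁ (x₁ t ^ (1/ν - 1)) t) →
      (∀ t ∈ Ioo (0:ℝ) T, HasDerivAt x₂ (x₂ t ^ (1/ν - 1)) t) →
      ∀ t ∈ Icc (0:ℝ) T, |x₁ t - x₂ t| ≤ C * t ^ (ν/(2*ν - 1)) := by
  have hα0 : 0 < 1/ν - 1 := by rw [sub_pos, lt_one_div one_pos] <;> linarith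
  have hα1 : 1/ν - 1 < 1 := by rw [sub_lt_iff_lt_add, one_div_lt] <;> linarith
  have hp : (1 - (1/ν - 1))⁻¹ = ν/(2*ν - 1) := by
    have : 2*ν - 1 ≠ 0 := by linarith
    field_simp; ring
  refine ⟨1, one_pos, fun T x₁ x₂ hT hc₁ hc₂ hx₁ hx₂ h₁ h₂ hd₁ hd₂ t ht => ?_⟩
  rw [one_mul, ← hp]
  exact abs_sub_le_of_nonneg_of_le
    (hx₁ t ht) (le_rpow_of_hasDerivAt_rpow hα0 hα1 hT hc₁ h₁ hd₁ t ht)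
    (hx₂ t ht) (le_rpow_of_hasDerivAt_rpow hα0 hα1 hT hc₂ h₂ hd₂ t ht)
end

section
/- Let 0 < ν < 1 and let a, b be nonzero complex numbers with arguments in [0, min(π, π/ν)). Then |a^ν - b^ν| is comparable (with constants depending only on ν) to |a-b| · min(|a|^{ν-1}, |b|^{ν-1}), and also comparable to |a-b| · min(|a|^{ν-1}, |b|^{ν-1}, |a-b|^{ν-1}). -/
/-!
Write `a = r e^{iα}`, `b = s e^{iβ}` with `s ≤ r`, and put `t = s / r`, `θ = |α - β| ≤ π`.
Since `a ^ ν = r^ν e^{iνα}`, both `‖a - b‖²` and `‖a ^ ν - b ^ ν‖²` are values of `polarDistSq`,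
and scaling out `r^{2ν}` reduces the comparison of `‖a ^ ν - b ^ ν‖` with `‖a - b‖ r^{ν-1}` to that
of `(1 - t)² + 4 t sin²(θ/2)` with `(1 - t^ν)² + 4 t^ν sin²(νθ/2)`. Bernoulli's inequality gives
`ν (1 - t) ≤ 1 - t^ν ≤ 1 - t`, concavity and monotonicity of `sin` give
`ν sin x ≤ sin (ν x) ≤ sin x`; the remaining mismatch `t ≤ t^ν` only matters for `t < 1/2`, where
the radial term `(1 - t)² > 1/4` absorbs it. Finally `‖a - b‖ ≤ 2 r` gives
`‖a - b‖^{ν-1} ≥ r^{ν-1} / 2`, so the extra entry of the minimum costs a factor `2`.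
-/

open Real

noncomputable def polarDistSq (r s θ : ℝ) : ℝ := (r - s) ^ 2 + 4 * r * s * sin (θ / 2) ^ 2

theorem polarDistSq_abs (r s θ : ℝ) : polarDistSq r s |θ| = polarDistSq r s θ := by
  rcases abs_cases θ with ⟨h, -⟩ | ⟨h, -⟩ <;> simp [polarDistSq, h, neg_div]

theorem polarDistSq_mul_mul (c r s θ : ℝ) :
    polarDistSq (c * r) (c * s) θ = c ^ 2 * polarDistSq r s θ := by
  unfold polarDistSq; ring

theorem Complex.norm_sub_sq_polar (r s α β : ℝ) :
    ‖(r : ℂ) * (cos α + sin α * I) - s * (cos β + sin β * I)‖ ^ 2 = polarDistSq r s (α - β) := by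
  have half : Real.cos (α - β) = 1 - 2 * Real.sin ((α - β) / 2) ^ 2 := by
    rw [Real.sin_sq_eq_half_sub, mul_div_cancel₀ _ two_ne_zero]
    ring
  rw [Complex.sq_norm, Complex.normSq_apply, polarDistSq]
  simp only [← Complex.ofReal_cos, ← Complex.ofReal_sin, Complex.sub_re, Complex.sub_im,
    Complex.mul_re, Complex.mul_im, Complex.add_re, Complex.add_im, Complex.ofReal_re,
    Complex.ofReal_im, Complex.I_re, Complex.I_im, mul_zero, zero_mul, mul_one, sub_zero,
    add_zero, zero_add]
  linear_combination r ^ 2 * Real.sin_sq_add_cos_sq α + s ^ 2 * Real.sin_sq_add_cos_sq β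
    + 2 * r * s * Real.cos_sub α β - 2 * r * s * half

theorem Complex.norm_sub_sq_eq_polarDistSq (a b : ℂ) :
    ‖a - b‖ ^ 2 = polarDistSq ‖a‖ ‖b‖ (a.arg - b.arg) := by
  conv_lhs => rw [← Complex.norm_mul_cos_add_sin_mul_I a, ← Complex.norm_mul_cos_add_sin_mul_I b]
  exact Complex.norm_sub_sq_polar ..

theorem Complex.norm_cpow_sub_cpow_sq (a b : ℂ) (ν : ℝ) :
    ‖a ^ (ν : ℂ) - b ^ (ν : ℂ)‖ ^ 2 = polarDistSq (‖a‖ ^ ν) (‖b‖ ^ ν) (ν * (a.arg - b.arg)) := by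
  rw [Complex.cpow_ofReal, Complex.cpow_ofReal, mul_sub, mul_comm ν, mul_comm ν]
  simp only [Complex.ofReal_cos, Complex.ofReal_sin]
  exact Complex.norm_sub_sq_polar ..

theorem mul_one_sub_le_one_sub_rpow {ν t : ℝ} (hν0 : 0 ≤ ν) (hν1 : ν ≤ 1) (ht : 0 ≤ t) :
    ν * (1 - t) ≤ 1 - t ^ ν := by
  have := rpow_one_add_le_one_add_mul_self (s := t - 1) (by linarith) hν0 hν1
  rw [add_sub_cancel] at this
  linarith

theorem mul_sin_le_sin_mul {ν x : ℝ} (hν0 : 0 ≤ ν) (hν1 : ν ≤ 1) (hx0 : 0 ≤ x) (hxπ : x ≤ π) :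
    ν * sin x ≤ sin (ν * x) := by
  have := strictConcaveOn_sin_Icc.concaveOn.2 (Set.left_mem_Icc.2 pi_pos.le) ⟨hx0, hxπ⟩
    (sub_nonneg.2 hν1) hν0 (sub_add_cancel 1 ν)
  simpa using this

theorem sq_mul_polarDistSq_le_polarDistSq_rpow {ν t θ : ℝ} (hν0 : 0 ≤ ν) (hν1 : ν ≤ 1)
    (ht0 : 0 ≤ t) (ht1 : t ≤ 1) (hθ0 : 0 ≤ θ) (hθπ : θ ≤ π) :
    ν ^ 2 * polarDistSq 1 t θ ≤ polarDistSq 1 (t ^ ν) (ν * θ) := by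
  have radial := mul_one_sub_le_one_sub_rpow hν0 hν1 ht0
  have angular : ν * sin (θ / 2) ≤ sin (ν * θ / 2) := by
    rw [mul_div_assoc]; exact mul_sin_le_sin_mul hν0 hν1 (by linarith) (by linarith)
  have hsin : 0 ≤ sin (θ / 2) := sin_nonneg_of_nonneg_of_le_pi (by linarith) (by linarith)
  have htν : t ≤ t ^ ν := self_le_rpow_of_le_one ht0 ht1 hν1
  unfold polarDistSq
  have radial_sq : (ν * (1 - t)) ^ 2 ≤ (1 - t ^ ν) ^ 2 :=
    pow_le_pow_left₀ (mul_nonneg hν0 (by linarith)) radial 2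
  have angular_sq : (ν * sin (θ / 2)) ^ 2 ≤ sin (ν * θ / 2) ^ 2 :=
    pow_le_pow_left₀ (by positivity) angular 2
  linarith [mul_le_mul htν angular_sq (by positivity) (ht0.trans htν)]

theorem polarDistSq_rpow_le {ν t θ : ℝ} (hν0 : 0 ≤ ν) (hν1 : ν ≤ 1)
    (ht0 : 0 ≤ t) (ht1 : t ≤ 1) (hθ0 : 0 ≤ θ) (hθπ : θ ≤ π) :
    polarDistSq 1 (t ^ ν) (ν * θ) ≤ 25 * polarDistSq 1 t θ := by
  have radial : 0 ≤ 1 - t ^ ν ∧ 1 - t ^ ν ≤ 1 - t :=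
    ⟨sub_nonneg.2 (rpow_le_one ht0 ht1 hν0), by linarith [self_le_rpow_of_le_one ht0 ht1 hν1]⟩
  have hνθ : 0 ≤ ν * θ ∧ ν * θ ≤ θ := ⟨by positivity, mul_le_of_le_one_left hθ0 hν1⟩
  have angular : 0 ≤ sin (ν * θ / 2) ∧ sin (ν * θ / 2) ≤ sin (θ / 2) :=
    ⟨sin_nonneg_of_nonneg_of_le_pi (by linarith) (by linarith),
      sin_le_sin_of_le_of_le_pi_div_two (by linarith [pi_pos]) (by linarith) (by linarith)⟩
  set S := sin (θ / 2) ^ 2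
  have hS : 0 ≤ S ∧ S ≤ 1 := ⟨sq_nonneg _, sin_sq_le_one _⟩
  have absorb : t ^ ν * S ≤ 2 * t * S + 4 * (1 - t) ^ 2 := by
    have hprod : t ^ ν * S ≤ 1 := mul_le_one₀ (rpow_le_one ht0 ht1 hν0) hS.1 hS.2
    rcases le_total (1 / 2) t with ht | ht <;> nlinarith
  unfold polarDistSq
  have radial_sq : (1 - t ^ ν) ^ 2 ≤ (1 - t) ^ 2 := pow_le_pow_left₀ radial.1 radial.2 2
  have angular_sq : sin (ν * θ / 2) ^ 2 ≤ S := pow_le_pow_left₀ angular.1 angular.2 2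
  linarith [mul_le_mul_of_nonneg_left angular_sq (rpow_nonneg ht0 ν), mul_nonneg ht0 hS.1,
    sq_nonneg (1 - t)]

theorem Complex.norm_cpow_sub_cpow_comparable {ν : ℝ} (hν0 : 0 ≤ ν) (hν1 : ν ≤ 1) {a b : ℂ}
    (ha : a ≠ 0) (hba : ‖b‖ ≤ ‖a‖) (harg : |a.arg - b.arg| ≤ π) :
    ν * (‖a - b‖ * ‖a‖ ^ (ν - 1)) ≤ ‖a ^ (ν : ℂ) - b ^ (ν : ℂ)‖ ∧
      ‖a ^ (ν : ℂ) - b ^ (ν : ℂ)‖ ≤ 5 * (‖a - b‖ * ‖a‖ ^ (ν - 1)) := by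
  set r := ‖a‖
  set t := ‖b‖ / r
  set θ := |a.arg - b.arg|
  have hr : 0 < r := norm_pos_iff.2 ha
  have ht0 : 0 ≤ t := by positivity
  have ht1 : t ≤ 1 := div_le_one_of_le₀ hba hr.le
  have hbt : ‖b‖ = r * t := (mul_div_cancel₀ _ hr.ne').symm
  have hX : ‖a ^ (ν : ℂ) - b ^ (ν : ℂ)‖ ^ 2 = (r ^ ν) ^ 2 * polarDistSq 1 (t ^ ν) (ν * θ) := by
    rw [Complex.norm_cpow_sub_cpow_sq, ← polarDistSq_abs, abs_mul, abs_of_nonneg hν0, hbt,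
      mul_rpow hr.le ht0, ← polarDistSq_mul_mul, mul_one]
  have hY : (‖a - b‖ * r ^ (ν - 1)) ^ 2 = (r ^ ν) ^ 2 * polarDistSq 1 t θ := by
    have hscale := polarDistSq_mul_mul r 1 t θ
    rw [mul_one] at hscale
    rw [mul_pow, Complex.norm_sub_sq_eq_polarDistSq, ← polarDistSq_abs, hbt, hscale,
      rpow_sub_one hr.ne']
    field_simp
  have hθ : 0 ≤ θ ∧ θ ≤ π := ⟨abs_nonneg _, harg⟩
  have lower := sq_mul_polarDistSq_le_polarDistSq_rpow hν0 hν1 ht0 ht1 hθ.1 hθ.2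
  have upper := polarDistSq_rpow_le hν0 hν1 ht0 ht1 hθ.1 hθ.2
  have hY0 : 0 ≤ ‖a - b‖ * r ^ (ν - 1) := by positivity
  constructor
  · rw [← pow_le_pow_iff_left₀ (mul_nonneg hν0 hY0) (norm_nonneg _) two_ne_zero, mul_pow, hX, hY,
      mul_left_comm]
    exact mul_le_mul_of_nonneg_left lower (by positivity)
  · rw [← pow_le_pow_iff_left₀ (norm_nonneg _) (by positivity) two_ne_zero, mul_pow, hX, hY,
      mul_left_comm, show (5 : ℝ) ^ 2 = 25 by norm_num]
    exact mul_le_mul_of_nonneg_left upper (by positivity)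

theorem mul_rpow_le_two_mul_mul_min_rpow {d R p : ℝ} (hp : -1 ≤ p) (hp0 : p ≤ 0) (hd0 : 0 ≤ d)
    (hdR : d ≤ 2 * R) : d * R ^ p ≤ 2 * (d * min (R ^ p) (d ^ p)) := by
  rcases hd0.eq_or_lt with rfl | hd
  · simp
  have hR : 0 < R := by linarith
  have h2p : 1 ≤ (2 : ℝ) * 2 ^ p := by
    rw [mul_comm, ← rpow_add_one two_ne_zero]
    exact one_le_rpow one_le_two (by linarith)
  have hRd : R ^ p ≤ 2 * d ^ p := calc
    R ^ p ≤ 2 * 2 ^ p * R ^ p := le_mul_of_one_le_left (by positivity) h2p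
    _ = 2 * (2 * R) ^ p := by rw [mul_rpow zero_le_two hR.le, mul_assoc]
    _ ≤ 2 * d ^ p := mul_le_mul_of_nonneg_left (rpow_le_rpow_of_nonpos hd hdR hp0) zero_le_two
  rw [mul_left_comm, mul_min_of_nonneg _ _ zero_le_two]
  exact mul_le_mul_of_nonneg_left (le_min (by linarith [rpow_nonneg hR.le p]) hRd) hd0

theorem cpow_diff_comparable_lt_one (ν : ℝ) (hν0 : 0 < ν) (hν1 : ν < 1) :
    ∃ C > 0, ∀ a b : ℂ, a ≠ 0 → b ≠ 0 →
      0 ≤ a.arg → a.arg < min π (π / ν) →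
      0 ≤ b.arg → b.arg < min π (π / ν) →
      (‖a ^ (ν:ℂ) - b ^ (ν:ℂ)‖ ≤
        C * (‖a - b‖ * min (‖a‖ ^ (ν-1)) (‖b‖ ^ (ν-1))) ∧
       ‖a - b‖ * min (‖a‖ ^ (ν-1)) (‖b‖ ^ (ν-1)) ≤
        C * ‖a ^ (ν:ℂ) - b ^ (ν:ℂ)‖ ∧
       ‖a ^ (ν:ℂ) - b ^ (ν:ℂ)‖ ≤
        C * (‖a - b‖ *
          min (min (‖a‖ ^ (ν-1)) (‖b‖ ^ (ν-1))) (‖a-b‖ ^ (ν-1))) ∧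
       ‖a - b‖ *
          min (min (‖a‖ ^ (ν-1)) (‖b‖ ^ (ν-1))) (‖a-b‖ ^ (ν-1)) ≤
        C * ‖a ^ (ν:ℂ) - b ^ (ν:ℂ)‖) := by
  refine ⟨10 + ν⁻¹, by positivity, fun a b ha hb ha0 haπ hb0 hbπ => ?_⟩
  rw [min_eq_left (le_div_self pi_pos.le hν0 hν1.le)] at haπ hbπ
  wlog hba : ‖b‖ ≤ ‖a‖ generalizing a b
  · simpa only [norm_sub_rev, min_comm] using this b a hb ha hb0 hbπ ha0 haπ (le_of_not_ge hba)
  rw [min_eq_left (rpow_le_rpow_of_nonpos (norm_pos_iff.2 hb) hba (by linarith))]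
  obtain ⟨hlow, hup⟩ := Complex.norm_cpow_sub_cpow_comparable hν0.le hν1.le ha hba
    (abs_sub_le_iff.2 ⟨by linarith, by linarith⟩)
  set X := ‖a ^ (ν : ℂ) - b ^ (ν : ℂ)‖
  set Y := ‖a - b‖ * ‖a‖ ^ (ν - 1)
  set Y' := ‖a - b‖ * min (‖a‖ ^ (ν - 1)) (‖a - b‖ ^ (ν - 1))
  have hYY' : Y ≤ 2 * Y' := mul_rpow_le_two_mul_mul_min_rpow (by linarith) (by linarith)
    (norm_nonneg _) (by linarith [norm_sub_le a b])
  have hY'Y : Y' ≤ Y := mul_le_mul_of_nonneg_left (min_le_left _ _) (norm_nonneg _)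
  have hYX : Y ≤ ν⁻¹ * X := (le_inv_mul_iff₀ hν0).2 hlow
  have hX0 : 0 ≤ X := norm_nonneg _
  have hY'0 : 0 ≤ Y' := by positivity
  have hν' : 0 ≤ ν⁻¹ := inv_nonneg.2 hν0.le
  refine ⟨?_, ?_, ?_, ?_⟩ <;>
    linarith [mul_nonneg hν' hX0, mul_nonneg hν' hY'0, mul_nonneg hν' (hY'0.trans hY'Y)]
end

section
/- Let ν > 1 and let a, b be nonzero complex numbers with arguments in [0, min(π, π/ν)). Then |a^ν - b^ν| is comparable (with constants depending only on ν) to |a-b| · max(|a|^{ν-1}, |b|^{ν-1}), and also comparable to |a-b| · max(|a|^{ν-1}, |b|^{ν-1}, |a-b|^{ν-1}). -/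
/-!
Write `a = A e^{iα}`, `b = B e^{iβ}` with `B ≤ A` and `θ = α - β`. For the principal branch
`a^ν = A^ν e^{iνα}`, so both `‖a - b‖²` and `‖a^ν - b^ν‖²` split into a radial and an angular part:
`(A - B)² + 2AB(1 - cos θ)` and `(A^ν - B^ν)² + 2A^νB^ν(1 - cos νθ)`. By convexity of `t ↦ t^ν`
the radial parts agree up to the factor `A^{ν-1}`, and since `|θ| ≤ |νθ| ≤ π` both `1 - cos θ` and
`1 - cos νθ` are comparable to `θ²`. The weights `AB A^{2ν-2}` and `A^νB^ν` are comparable only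
when `A ≤ 2B`; when `A > 2B` the radial part `(A^ν - B^ν)² ≥ A^{2ν}/4` dominates everything.
Finally `‖a - b‖ ≤ 2A`, so adding `‖a - b‖^{ν-1}` to the maximum costs at most `2^{ν-1}`.
-/

open Real

namespace Real

section

variable {A B ν : ℝ}

lemma rpow_le_rpow_sub_one_mul (hB : 0 ≤ B) (hBA : B ≤ A) (hν : 1 ≤ ν) :
    B ^ ν ≤ A ^ (ν - 1) * B := by
  calc B ^ ν = B ^ (ν - 1) * B := by
        rw [← rpow_add_one' hB (by linarith), sub_add_cancel]
    _ ≤ A ^ (ν - 1) * B := by gcongr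

lemma rpow_sub_one_mul_sub_le (hB : 0 ≤ B) (hBA : B ≤ A) (hν : 1 ≤ ν) :
    A ^ (ν - 1) * (A - B) ≤ A ^ ν - B ^ ν := by
  have hA : A ^ ν = A ^ (ν - 1) * A := by
    rw [← rpow_add_one' (hB.trans hBA) (by linarith), sub_add_cancel]
  linarith [rpow_le_rpow_sub_one_mul hB hBA hν]

lemma rpow_sub_rpow_le (hB : 0 ≤ B) (hBA : B ≤ A) (hν : 1 ≤ ν) :
    A ^ ν - B ^ ν ≤ ν * A ^ (ν - 1) * (A - B) := by
  rcases (hB.trans hBA).eq_or_lt with rfl | hA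
  · obtain rfl : B = 0 := le_antisymm hBA hB
    simp
  have bernoulli := one_add_mul_self_le_rpow_one_add (s := B / A - 1) (by
    linarith [div_nonneg hB hA.le]) hν
  rw [add_sub_cancel, div_rpow hB hA.le] at bernoulli
  have hA' : A ^ ν = A ^ (ν - 1) * A := by
    rw [← rpow_add_one' hA.le (by linarith), sub_add_cancel]
  have hAν : 0 < A ^ ν := rpow_pos_of_pos hA ν
  rw [le_div_iff₀ hAν] at bernoulli
  have : (1 + ν * (B / A - 1)) * A ^ ν = A ^ ν - ν * A ^ (ν - 1) * (A - B) := by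
    rw [hA']; field_simp; ring
  linarith

end

lemma one_sub_cos_mul_le {x : ℝ} (c : ℝ) (hx : |x| ≤ π) :
    1 - cos (c * x) ≤ c ^ 2 * π ^ 2 / 4 * (1 - cos x) := by
  have upper : 1 - cos (c * x) ≤ (c * x) ^ 2 / 2 := by
    linarith [one_sub_sq_div_two_le_cos (x := c * x)]
  have lower : 2 / π ^ 2 * x ^ 2 ≤ 1 - cos x := by
    linarith [cos_le_one_sub_mul_cos_sq hx]
  calc 1 - cos (c * x) ≤ c ^ 2 * π ^ 2 / 4 * (2 / π ^ 2 * x ^ 2) := by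
        convert upper using 1; field_simp; ring
    _ ≤ c ^ 2 * π ^ 2 / 4 * (1 - cos x) := by gcongr

end Real

/-- `chordSq R S (α - β) = ‖R e^{iα} - S e^{iβ}‖ ^ 2`. -/
noncomputable def chordSq (R S θ : ℝ) : ℝ := (R - S) ^ 2 + 2 * R * S * (1 - cos θ)

section chordSq

variable {R S θ ν : ℝ}

lemma chordSq_comm (R S θ : ℝ) : chordSq R S θ = chordSq S R θ := by
  unfold chordSq; ring

lemma chordSq_le_sq_add (hR : 0 ≤ R) (hS : 0 ≤ S) (θ : ℝ) : chordSq R S θ ≤ (R + S) ^ 2 := by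
  unfold chordSq; nlinarith [neg_one_le_cos θ, mul_nonneg hR hS]

lemma chordSq_nonneg (hR : 0 ≤ R) (hS : 0 ≤ S) (θ : ℝ) : 0 ≤ chordSq R S θ := by
  unfold chordSq
  have : 0 ≤ 1 - cos θ := by linarith [cos_le_one θ]
  positivity

lemma chordSq_rpow_le (hR : 0 ≤ R) (hS : 0 ≤ S) (hν : 1 ≤ ν) (hθ : |θ| ≤ π) :
    chordSq (R ^ ν) (S ^ ν) (ν * θ) ≤
      (ν * π / 2) ^ 2 * max (R ^ (ν - 1)) (S ^ (ν - 1)) ^ 2 * chordSq R S θ := by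
  wlog hSR : S ≤ R generalizing R S
  · rw [chordSq_comm, max_comm, chordSq_comm R]
    exact this hS hR (le_of_not_ge hSR)
  rw [max_eq_left (rpow_le_rpow hS hSR (by linarith))]
  have radial : (R ^ ν - S ^ ν) ^ 2 ≤ ν ^ 2 * (R ^ (ν - 1)) ^ 2 * (R - S) ^ 2 := by
    have := rpow_sub_rpow_le hS hSR hν
    have : 0 ≤ R ^ ν - S ^ ν := by linarith [rpow_le_rpow hS hSR (by linarith : 0 ≤ ν)]
    nlinarith
  have product : R ^ ν * S ^ ν ≤ (R ^ (ν - 1)) ^ 2 * (R * S) := by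
    have hR' : R ^ ν = R ^ (ν - 1) * R := by
      rw [← rpow_add_one' hR (by linarith), sub_add_cancel]
    rw [hR']
    have := rpow_le_rpow_sub_one_mul hS hSR hν
    have : 0 ≤ R ^ (ν - 1) * R := by positivity
    nlinarith
  have angular := one_sub_cos_mul_le ν hθ
  have hπ : 1 ≤ π ^ 2 / 4 := by nlinarith [pi_gt_three]
  have hcosν : 0 ≤ 1 - cos (ν * θ) := by linarith [cos_le_one (ν * θ)]
  set m := R ^ (ν - 1)
  unfold chordSq
  calc (R ^ ν - S ^ ν) ^ 2 + 2 * R ^ ν * S ^ ν * (1 - cos (ν * θ))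
      ≤ ν ^ 2 * m ^ 2 * (R - S) ^ 2 +
          2 * (m ^ 2 * (R * S)) * (ν ^ 2 * π ^ 2 / 4 * (1 - cos θ)) := by
        rw [mul_assoc 2]
        gcongr
    _ ≤ (ν * π / 2) ^ 2 * m ^ 2 * ((R - S) ^ 2 + 2 * R * S * (1 - cos θ)) := by
        have : 0 ≤ ν ^ 2 * m ^ 2 * (R - S) ^ 2 := by positivity
        nlinarith

lemma sq_rpow_mul_chordSq_le_of_two_mul_le (hS : 0 ≤ S) (hSR : 2 * S ≤ R) (hν : 1 ≤ ν) :
    (R ^ (ν - 1)) ^ 2 * chordSq R S θ ≤ 16 * chordSq (R ^ ν) (S ^ ν) (ν * θ) := by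
  have hR : 0 ≤ R := by linarith
  have hR' : R ^ ν = R ^ (ν - 1) * R := by
    rw [← rpow_add_one' hR (by linarith), sub_add_cancel]
  have hSν : S ^ ν ≤ R ^ ν / 2 := by
    calc S ^ ν ≤ (R / 2) ^ ν := rpow_le_rpow hS (by linarith) (by linarith)
      _ = R ^ ν / 2 ^ ν := div_rpow hR zero_le_two ν
      _ ≤ R ^ ν / 2 := by
        gcongr
        simpa using rpow_le_rpow_of_exponent_le one_le_two hν
  have hcos : 0 ≤ 1 - cos (ν * θ) := by linarith [cos_le_one (ν * θ)]
  calc (R ^ (ν - 1)) ^ 2 * chordSq R S θ ≤ (R ^ (ν - 1)) ^ 2 * (2 * R) ^ 2 := by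
        gcongr
        exact (chordSq_le_sq_add hR hS θ).trans (by gcongr; linarith)
    _ = 16 * (R ^ ν / 2) ^ 2 := by rw [hR']; ring
    _ ≤ 16 * (R ^ ν - S ^ ν) ^ 2 := by gcongr; linarith
    _ ≤ 16 * chordSq (R ^ ν) (S ^ ν) (ν * θ) := by
        unfold chordSq; gcongr; exact le_add_of_nonneg_right (by positivity)

lemma sq_rpow_mul_chordSq_le_of_le_two_mul (hS : 0 ≤ S) (hSR : S ≤ R) (hRS : R ≤ 2 * S)
    (hν : 1 ≤ ν) (hθ : |ν * θ| ≤ π) :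
    (R ^ (ν - 1)) ^ 2 * chordSq R S θ ≤ 2 ^ ν * π ^ 2 / 4 * chordSq (R ^ ν) (S ^ ν) (ν * θ) := by
  have hR : 0 ≤ R := hS.trans hSR
  have hR' : R ^ ν = R ^ (ν - 1) * R := by
    rw [← rpow_add_one' hR (by linarith), sub_add_cancel]
  have hS' : S ^ ν = S ^ (ν - 1) * S := by
    rw [← rpow_add_one' hS (by linarith), sub_add_cancel]
  have radial : (R ^ (ν - 1)) ^ 2 * (R - S) ^ 2 ≤ (R ^ ν - S ^ ν) ^ 2 := by
    rw [← mul_pow]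
    exact pow_le_pow_left₀ (mul_nonneg (rpow_nonneg hR _) (by linarith))
      (rpow_sub_one_mul_sub_le hS hSR hν) 2
  have product : (R ^ (ν - 1)) ^ 2 * (R * S) ≤ 2 ^ ν * (R ^ ν * S ^ ν) := by
    have : R ^ (ν - 1) ≤ 2 ^ ν * S ^ (ν - 1) := by
      calc R ^ (ν - 1) ≤ (2 * S) ^ (ν - 1) := rpow_le_rpow hR hRS (by linarith)
        _ = 2 ^ (ν - 1) * S ^ (ν - 1) := mul_rpow zero_le_two hS
        _ ≤ 2 ^ ν * S ^ (ν - 1) := by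
          gcongr
          · exact one_le_two
          · linarith
    rw [hR', hS']
    have : 0 ≤ R ^ (ν - 1) * R * S := by positivity
    nlinarith
  have angular : 1 - cos θ ≤ π ^ 2 / 4 * (1 - cos (ν * θ)) := by
    have h := one_sub_cos_mul_le ν⁻¹ hθ
    rw [← mul_assoc, inv_mul_cancel₀ (by linarith), one_mul] at h
    refine h.trans ?_
    gcongr
    · linarith [cos_le_one (ν * θ)]
    · exact mul_le_of_le_one_left (by positivity)
        (pow_le_one₀ (by positivity) (inv_le_one_of_one_le₀ hν))
  have hcos : 0 ≤ 1 - cos θ := by linarith [cos_le_one θ]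
  have hconst : 1 ≤ 2 ^ ν * π ^ 2 / 4 := by
    have : (1 : ℝ) ≤ 2 ^ ν := one_le_rpow one_le_two (by linarith)
    nlinarith [pi_gt_three]
  unfold chordSq
  calc (R ^ (ν - 1)) ^ 2 * ((R - S) ^ 2 + 2 * R * S * (1 - cos θ))
      = (R ^ (ν - 1)) ^ 2 * (R - S) ^ 2 + 2 * ((R ^ (ν - 1)) ^ 2 * (R * S)) * (1 - cos θ) := by
        ring
    _ ≤ (R ^ ν - S ^ ν) ^ 2 + 2 * (2 ^ ν * (R ^ ν * S ^ ν)) * (π ^ 2 / 4 * (1 - cos (ν * θ))) := by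
        gcongr
    _ ≤ 2 ^ ν * π ^ 2 / 4 * ((R ^ ν - S ^ ν) ^ 2 + 2 * R ^ ν * S ^ ν * (1 - cos (ν * θ))) := by
        have : 0 ≤ (R ^ ν - S ^ ν) ^ 2 := sq_nonneg _
        nlinarith

lemma sq_max_rpow_mul_chordSq_le (hR : 0 ≤ R) (hS : 0 ≤ S) (hν : 1 ≤ ν) (hθ : |ν * θ| ≤ π) :
    max (R ^ (ν - 1)) (S ^ (ν - 1)) ^ 2 * chordSq R S θ ≤
      (4 * 2 ^ ν) ^ 2 * chordSq (R ^ ν) (S ^ ν) (ν * θ) := by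
  wlog hSR : S ≤ R generalizing R S
  · rw [chordSq_comm, max_comm, chordSq_comm (R ^ ν)]
    exact this hS hR (le_of_not_ge hSR)
  rw [max_eq_left (rpow_le_rpow hS hSR (by linarith))]
  have h2ν : (2 : ℝ) ≤ 2 ^ ν := by simpa using rpow_le_rpow_of_exponent_le one_le_two hν
  have := chordSq_nonneg (rpow_nonneg hR ν) (rpow_nonneg hS ν) (ν * θ)
  rcases le_or_gt (2 * S) R with hfar | hnear
  · refine (sq_rpow_mul_chordSq_le_of_two_mul_le hS hfar hν).trans ?_
    gcongr
    nlinarith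
  · refine (sq_rpow_mul_chordSq_le_of_le_two_mul hS hSR hnear.le hν hθ).trans ?_
    gcongr
    have hπ : π ^ 2 / 4 ≤ 4 := by nlinarith [pi_lt_four, pi_pos]
    nlinarith

end chordSq

section

variable {ν : ℝ}

lemma norm_sub_rpow_le_two_rpow_mul_max {E : Type*} [SeminormedAddCommGroup E] (hν : 1 ≤ ν)
    (a b : E) : ‖a - b‖ ^ (ν - 1) ≤ 2 ^ (ν - 1) * max (‖a‖ ^ (ν - 1)) (‖b‖ ^ (ν - 1)) := by
  rw [← rpow_max (norm_nonneg a) (norm_nonneg b) (by linarith),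
    ← mul_rpow zero_le_two (le_max_of_le_left (norm_nonneg a))]
  refine rpow_le_rpow (norm_nonneg _) ?_ (by linarith)
  calc ‖a - b‖ ≤ ‖a‖ + ‖b‖ := norm_sub_le a b
    _ ≤ 2 * max ‖a‖ ‖b‖ := by linarith [le_max_left ‖a‖ ‖b‖, le_max_right ‖a‖ ‖b‖]

namespace Complex

lemma norm_sub_sq_eq_chordSq_of_polar {x y : ℂ} {R S α β : ℝ}
    (hxre : x.re = R * Real.cos α) (hxim : x.im = R * Real.sin α)
    (hyre : y.re = S * Real.cos β) (hyim : y.im = S * Real.sin β) :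
    ‖x - y‖ ^ 2 = chordSq R S (α - β) := by
  rw [Complex.sq_norm, normSq_apply, sub_re, sub_im, hxre, hxim, hyre, hyim, chordSq,
    Real.cos_sub]
  linear_combination R ^ 2 * Real.sin_sq_add_cos_sq α + S ^ 2 * Real.sin_sq_add_cos_sq β

lemma norm_sub_sq_eq_chordSq (a b : ℂ) : ‖a - b‖ ^ 2 = chordSq ‖a‖ ‖b‖ (arg a - arg b) :=
  norm_sub_sq_eq_chordSq_of_polar (norm_mul_cos_arg a).symm (norm_mul_sin_arg a).symm
    (norm_mul_cos_arg b).symm (norm_mul_sin_arg b).symm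

lemma norm_cpow_sub_cpow_sq_eq_chordSq (a b : ℂ) (ν : ℝ) :
    ‖a ^ (ν : ℂ) - b ^ (ν : ℂ)‖ ^ 2 = chordSq (‖a‖ ^ ν) (‖b‖ ^ ν) (ν * (arg a - arg b)) := by
  rw [norm_sub_sq_eq_chordSq_of_polar (cpow_ofReal_re a ν) (cpow_ofReal_im a ν)
    (cpow_ofReal_re b ν) (cpow_ofReal_im b ν)]
  ring_nf

lemma norm_cpow_sub_cpow_le (hν : 1 ≤ ν) (a b : ℂ) (hθ : |arg a - arg b| ≤ π) :
    ‖a ^ (ν : ℂ) - b ^ (ν : ℂ)‖ ≤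
      ν * π / 2 * (‖a - b‖ * max (‖a‖ ^ (ν - 1)) (‖b‖ ^ (ν - 1))) := by
  have : 0 ≤ ν * π / 2 := by have := pi_pos; positivity
  rw [← pow_le_pow_iff_left₀ (norm_nonneg _) (by positivity) two_ne_zero,
    norm_cpow_sub_cpow_sq_eq_chordSq, mul_pow, mul_pow, norm_sub_sq_eq_chordSq]
  calc _ ≤ _ := chordSq_rpow_le (norm_nonneg a) (norm_nonneg b) hν hθ
    _ = _ := by ring

lemma norm_sub_mul_max_rpow_le (hν : 1 ≤ ν) (a b : ℂ) (hθ : |ν * (arg a - arg b)| ≤ π) :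
    ‖a - b‖ * max (‖a‖ ^ (ν - 1)) (‖b‖ ^ (ν - 1)) ≤ 4 * 2 ^ ν * ‖a ^ (ν : ℂ) - b ^ (ν : ℂ)‖ := by
  rw [← pow_le_pow_iff_left₀ (by positivity) (by positivity) two_ne_zero, mul_pow, mul_pow,
    norm_cpow_sub_cpow_sq_eq_chordSq, norm_sub_sq_eq_chordSq]
  calc _ = _ := by ring
    _ ≤ _ := sq_max_rpow_mul_chordSq_le (norm_nonneg a) (norm_nonneg b) hν hθ

end Complex

end

theorem cpow_diff_comparable_gt_one (ν : ℝ) (hν1 : 1 < ν) :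
    ∃ C > 0, ∀ a b : ℂ, a ≠ 0 → b ≠ 0 →
      0 ≤ a.arg → a.arg < min π (π / ν) →
      0 ≤ b.arg → b.arg < min π (π / ν) →
      (‖a ^ (ν:ℂ) - b ^ (ν:ℂ)‖ ≤
        C * (‖a - b‖ * max (‖a‖ ^ (ν-1)) (‖b‖ ^ (ν-1))) ∧
       ‖a - b‖ * max (‖a‖ ^ (ν-1)) (‖b‖ ^ (ν-1)) ≤
        C * ‖a ^ (ν:ℂ) - b ^ (ν:ℂ)‖ ∧
       ‖a ^ (ν:ℂ) - b ^ (ν:ℂ)‖ ≤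
        C * (‖a - b‖ *
          max (max (‖a‖ ^ (ν-1)) (‖b‖ ^ (ν-1))) (‖a-b‖ ^ (ν-1))) ∧
       ‖a - b‖ *
          max (max (‖a‖ ^ (ν-1)) (‖b‖ ^ (ν-1))) (‖a-b‖ ^ (ν-1)) ≤
        C * ‖a ^ (ν:ℂ) - b ^ (ν:ℂ)‖) := by
  have hν : 1 ≤ ν := hν1.le
  set K := ν * π / 2 + 4 * 2 ^ ν
  have hK₁ : ν * π / 2 ≤ K := le_add_of_nonneg_right (by positivity)
  have hK₂ : 4 * 2 ^ ν ≤ K := le_add_of_nonneg_left (by positivity)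
  have ht : (1 : ℝ) ≤ 2 ^ (ν - 1) := one_le_rpow one_le_two (by linarith)
  have hKt : K ≤ K * 2 ^ (ν - 1) := le_mul_of_one_le_right (by positivity) ht
  refine ⟨K * 2 ^ (ν - 1), by positivity, ?_⟩
  intro a b _ _ ha0 ha hb0 hb
  obtain ⟨haπ, haν⟩ := lt_min_iff.mp ha
  obtain ⟨hbπ, hbν⟩ := lt_min_iff.mp hb
  rw [lt_div_iff₀ (by linarith)] at haν hbν
  set m := max (‖a‖ ^ (ν - 1)) (‖b‖ ^ (ν - 1))
  have hm : 0 ≤ m := le_max_of_le_left (by positivity)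
  have upper : ‖a ^ (ν : ℂ) - b ^ (ν : ℂ)‖ ≤ K * (‖a - b‖ * m) :=
    (Complex.norm_cpow_sub_cpow_le hν a b (abs_le.mpr ⟨by linarith, by linarith⟩)).trans (by gcongr)
  have lower : ‖a - b‖ * m ≤ K * ‖a ^ (ν : ℂ) - b ^ (ν : ℂ)‖ :=
    (Complex.norm_sub_mul_max_rpow_le hν a b (abs_le.mpr ⟨by nlinarith, by nlinarith⟩)).trans
      (by gcongr)
  have hm' : max m (‖a - b‖ ^ (ν - 1)) ≤ 2 ^ (ν - 1) * m :=
    max_le (le_mul_of_one_le_left hm ht) (norm_sub_rpow_le_two_rpow_mul_max hν a b)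
  refine ⟨upper.trans (by gcongr), lower.trans (by gcongr),
    upper.trans (by gcongr; exact le_max_left _ _), ?_⟩
  calc ‖a - b‖ * max m (‖a - b‖ ^ (ν - 1)) ≤ 2 ^ (ν - 1) * (‖a - b‖ * m) := by
        rw [mul_left_comm]; gcongr
    _ ≤ 2 ^ (ν - 1) * (K * ‖a ^ (ν : ℂ) - b ^ (ν : ℂ)‖) := by gcongr
    _ = K * 2 ^ (ν - 1) * ‖a ^ (ν : ℂ) - b ^ (ν : ℂ)‖ := by ring
end

section
/- Let z₁, z₂ ∈ ℂ with z₁ ≠ z₂ and let f ∈ L¹(ℂ) ∩ L^∞(ℂ). Then |z₁ - z₂| · ∫_ℂ |f(s)| / (|s - z₁| · |s - z₂|) ds ≤ C · (‖f‖_{L¹} + ‖f‖_{L^∞}) · φ(|z₁ - z₂|), where φ(x) = x·max(-ln x, 1) and C is a universal constant. -/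
/-!
Put `a = ‖s - z₁‖`, `b = ‖s - z₂‖` and `d = ‖z₁ - z₂‖ ≤ a + b`. The point farther away is at
distance at least `max(a, d) / 2` (or `max(b, d) / 2`), so
`1 / (a b) ≤ 2 (k_d(a) + k_d(b))` with the cut-off kernel `k_d(a) = 1 / (a max(a, d))`, and it
suffices to bound `∫ |f(s)| k_d(‖s - z‖) ds` around a single centre `z`. Outside the unit disc
`k_d ≤ 1`, which costs `‖f‖₁`; inside it, polar coordinates give
`∫_{‖x‖<1} k_d(‖x‖) dx = 2π ∫₀¹ dρ / max(ρ, d) ≤ 2π (1 + log⁺ (1/d))`, which costs a multiple of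
`‖f‖_∞ max(-log d, 1)`.
-/

open MeasureTheory

/-- The weight function φ(x) = x · max(-ln x, 1); note φ(0) = 0 since `Real.log 0 = 0`. -/
noncomputable def phi (x : ℝ) : ℝ := x * max (-Real.log x) 1

open Set Metric ENNReal Measure Real

section Radial

variable {E : Type*} [NormedAddCommGroup E] [NormedSpace ℝ E] [Nontrivial E]
  [FiniteDimensional ℝ E] [MeasurableSpace E] [BorelSpace E] (μ : Measure E) [μ.IsAddHaarMeasure]

theorem lintegral_fun_norm_addHaar {g : ℝ → ℝ≥0∞} (hg : Measurable g) :
    ∫⁻ x, g ‖x‖ ∂μ = Module.finrank ℝ E * μ (ball 0 1) *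
      ∫⁻ y in Ioi (0 : ℝ), ENNReal.ofReal (y ^ (Module.finrank ℝ E - 1)) * g y :=
  calc ∫⁻ x, g ‖x‖ ∂μ
      = ∫⁻ x : ({(0 : E)}ᶜ : Set E), g ‖(x : E)‖ ∂(μ.comap (↑)) := by
        rw [lintegral_subtype_comap (measurableSet_singleton _).compl (fun x ↦ g ‖x‖),
          restrict_compl_singleton]
    _ = ∫⁻ p, g p.2 ∂(μ.toSphere.prod (volumeIoiPow (Module.finrank ℝ E - 1))) := by
        simpa using (μ.measurePreserving_homeomorphUnitSphereProd.lintegral_comp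
          (hg.comp (measurable_subtype_coe.comp measurable_snd)))
    _ = μ.toSphere univ * ∫⁻ y, g y ∂(volumeIoiPow (Module.finrank ℝ E - 1)) := by
        rw [← lintegral_map (f := fun y : Ioi (0 : ℝ) ↦ g y) (hg.comp measurable_subtype_coe)
          measurable_snd, map_snd_prod, lintegral_smul_measure, smul_eq_mul]
    _ = _ := by
        rw [toSphere_apply_univ, volumeIoiPow, lintegral_withDensity_eq_lintegral_mul _
            (measurable_subtype_coe.pow_const _).ennreal_ofReal
            (g := fun y : Ioi (0 : ℝ) ↦ g y) (hg.comp measurable_subtype_coe)]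
        simp only [Pi.mul_apply]
        rw [lintegral_subtype_comap measurableSet_Ioi (fun y ↦ ENNReal.ofReal (y ^ _) * g y)]

theorem setLIntegral_ball_fun_norm_sub_addHaar {g : ℝ → ℝ≥0∞} (hg : Measurable g) (z : E) (r : ℝ) :
    ∫⁻ x in ball z r, g ‖x - z‖ ∂μ = Module.finrank ℝ E * μ (ball 0 1) *
      ∫⁻ y in Ioo 0 r, ENNReal.ofReal (y ^ (Module.finrank ℝ E - 1)) * g y := by
  have hind : (ball z r).indicator (fun x ↦ g ‖x - z‖) = fun x ↦ (Iio r).indicator g ‖x - z‖ := by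
    ext x
    simp [indicator, dist_eq_norm]
  rw [← lintegral_indicator measurableSet_ball, hind,
    lintegral_sub_right_eq_self (fun x ↦ (Iio r).indicator g ‖x‖) z,
    lintegral_fun_norm_addHaar μ (hg.indicator measurableSet_Iio)]
  simp_rw [← indicator_mul_right (Iio r) (fun y ↦ ENNReal.ofReal (y ^ (Module.finrank ℝ E - 1)))]
  rw [setLIntegral_indicator measurableSet_Iio, Iio_inter_Ioi]

end Radial

theorem lintegral_Ioc_inv {a b : ℝ} (ha : 0 < a) (hab : a ≤ b) :
    ∫⁻ y in Ioc a b, ENNReal.ofReal y⁻¹ = ENNReal.ofReal (log (b / a)) := by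
  have hint : IntervalIntegrable (fun y : ℝ ↦ y⁻¹) volume a b :=
    intervalIntegrable_inv_iff.2 (Or.inr fun h0 ↦ by
      rw [uIcc_of_le hab] at h0; exact ha.not_ge h0.1)
  rw [← ofReal_integral_eq_lintegral_ofReal hint.1, ← intervalIntegral.integral_of_le hab,
    integral_inv_of_pos ha (ha.trans_le hab)]
  filter_upwards [ae_restrict_mem measurableSet_Ioc] with y hy
  exact inv_nonneg.2 (ha.trans hy.1).le

theorem lintegral_Ioo_inv_max_le {d : ℝ} (hd : 0 < d) :
    ∫⁻ y in Ioo 0 1, ENNReal.ofReal (max y d)⁻¹ ≤ ENNReal.ofReal (2 * max (-log d) 1) := by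
  set s := min d 1
  have hs : 0 < s := lt_min hd one_pos
  have hcover : Ioo (0 : ℝ) 1 ⊆ Ioc 0 s ∪ Ioc s 1 := fun y hy ↦ by
    rcases le_or_gt y s with h | h
    exacts [Or.inl ⟨hy.1, h⟩, Or.inr ⟨h, hy.2.le⟩]
  have hlog : 1 - log s ≤ 2 * max (-log d) 1 := by
    rcases min_cases d 1 with ⟨h, -⟩ | ⟨h, -⟩ <;> simp only [s, h]
    · linarith [le_max_left (-log d) 1, le_max_right (-log d) 1]
    · linarith [le_max_right (-log d) 1, Real.log_one]
  calc ∫⁻ y in Ioo 0 1, ENNReal.ofReal (max y d)⁻¹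
      ≤ ∫⁻ y in Ioc 0 s ∪ Ioc s 1, ENNReal.ofReal (max y d)⁻¹ := lintegral_mono_set hcover
    _ ≤ (∫⁻ _ in Ioc 0 s, ENNReal.ofReal d⁻¹) + ∫⁻ y in Ioc s 1, ENNReal.ofReal y⁻¹ := by
        refine (lintegral_union_le _ _ _).trans (add_le_add ?_ ?_) <;>
          refine setLIntegral_mono' measurableSet_Ioc fun y hy ↦ ofReal_le_ofReal ?_
        · exact inv_anti₀ hd (le_max_right y d)
        · exact inv_anti₀ (hs.trans hy.1) (le_max_left y d)
    _ = ENNReal.ofReal (s * d⁻¹) + ENNReal.ofReal (-log s) := by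
        rw [setLIntegral_const, Real.volume_Ioc, sub_zero, lintegral_Ioc_inv hs (min_le_right d 1),
          one_div, Real.log_inv, ofReal_mul hs.le, mul_comm]
    _ ≤ ENNReal.ofReal (2 * max (-log d) 1) := by
        rw [← ofReal_add (by positivity) (neg_nonneg.2 (log_nonpos hs.le (min_le_right d 1)))]
        refine ofReal_le_ofReal (le_trans ?_ hlog)
        have : s * d⁻¹ ≤ 1 := by
          rw [← div_eq_mul_inv, div_le_one hd]; exact min_le_left d 1
        linarith

noncomputable def cutoffInvSq (d a : ℝ) : ℝ := a⁻¹ * (max a d)⁻¹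

theorem cutoffInvSq_nonneg {d a : ℝ} (ha : 0 ≤ a) : 0 ≤ cutoffInvSq d a :=
  mul_nonneg (inv_nonneg.2 ha) (inv_nonneg.2 (ha.trans (le_max_left a d)))

theorem cutoffInvSq_le_one {d a : ℝ} (ha : 1 ≤ a) : cutoffInvSq d a ≤ 1 :=
  mul_le_one₀ (inv_le_one_of_one_le₀ ha) (by positivity)
    (inv_le_one_of_one_le₀ (ha.trans (le_max_left a d)))

theorem measurable_cutoffInvSq (d : ℝ) : Measurable (cutoffInvSq d) := by
  unfold cutoffInvSq; fun_prop

theorem inv_mul_inv_le_cutoffInvSq_add {a b d : ℝ} (ha : 0 ≤ a) (hb : 0 ≤ b) (hd : 0 < d)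
    (hab : d ≤ a + b) : a⁻¹ * b⁻¹ ≤ 2 * (cutoffInvSq d a + cutoffInvSq d b) := by
  wlog h : a ≤ b generalizing a b
  · simpa [mul_comm, add_comm] using this hb ha (by linarith) (le_of_not_ge h)
  have hb' : 0 < b := by linarith
  have hmax : max a d ≤ 2 * b := max_le (by linarith) (by linarith)
  calc a⁻¹ * b⁻¹ = 2 * (a⁻¹ * (2 * b)⁻¹) := by field_simp
    _ ≤ 2 * cutoffInvSq d a := by
        unfold cutoffInvSq
        gcongr
    _ ≤ 2 * (cutoffInvSq d a + cutoffInvSq d b) := by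
        linarith [cutoffInvSq_nonneg (d := d) hb]

theorem setLIntegral_ball_cutoffInvSq_le (z : ℂ) {d : ℝ} (hd : 0 < d) :
    ∫⁻ x in ball z 1, ENNReal.ofReal (cutoffInvSq d ‖x - z‖) ≤
      ENNReal.ofReal (4 * π * max (-log d) 1) := by
  rw [setLIntegral_ball_fun_norm_sub_addHaar volume (measurable_cutoffInvSq d).ennreal_ofReal,
    Complex.finrank_real_complex, Complex.volume_ball]
  have hcancel : ∀ y ∈ Ioo (0 : ℝ) 1, ENNReal.ofReal (y ^ (2 - 1)) *
      ENNReal.ofReal (cutoffInvSq d y) = ENNReal.ofReal (max y d)⁻¹ := fun y hy ↦ by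
    rw [← ofReal_mul (by simpa using hy.1.le), cutoffInvSq, pow_one, ← mul_assoc,
      mul_inv_cancel₀ hy.1.ne', one_mul]
  rw [setLIntegral_congr_fun measurableSet_Ioo hcancel]
  refine (mul_le_mul_right (lintegral_Ioo_inv_max_le hd) _).trans_eq ?_
  rw [← ofReal_coe_nnreal, NNReal.coe_real_pi, ofReal_one, one_pow, one_mul, Nat.cast_ofNat,
    ← ofReal_ofNat 2, ← ofReal_mul zero_le_two, ← ofReal_mul (by positivity)]
  ring_nf

theorem lintegral_enorm_mul_cutoffInvSq_le {F : Type*} [NormedAddCommGroup F] (f : ℂ → F)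
    (z : ℂ) {d : ℝ} (hd : 0 < d) :
    ∫⁻ s, ‖f s‖ₑ * ENNReal.ofReal (cutoffInvSq d ‖s - z‖) ≤
      ENNReal.ofReal (4 * π * max (-log d) 1) * eLpNorm f ⊤ volume +
        eLpNorm f 1 volume := by
  rw [← lintegral_add_compl _ (measurableSet_ball : MeasurableSet (ball z 1))]
  gcongr
  · calc ∫⁻ s in ball z 1, ‖f s‖ₑ * ENNReal.ofReal (cutoffInvSq d ‖s - z‖)
        ≤ ∫⁻ s in ball z 1, eLpNorm f ⊤ volume * ENNReal.ofReal (cutoffInvSq d ‖s - z‖) := by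
          refine lintegral_mono_ae ((ae_restrict_of_ae (enorm_ae_le_eLpNormEssSup f volume)).mono
            fun s hs ↦ ?_)
          rw [eLpNorm_exponent_top]
          gcongr
      _ ≤ eLpNorm f ⊤ volume * ENNReal.ofReal (4 * π * max (-log d) 1) := by
          rw [lintegral_const_mul (f := fun s ↦ ENNReal.ofReal (cutoffInvSq d ‖s - z‖)) _
            ((measurable_cutoffInvSq d).comp (measurable_id.sub_const z).norm).ennreal_ofReal]
          gcongr
          exact setLIntegral_ball_cutoffInvSq_le z hd
      _ = _ := mul_comm _ _
  · calc ∫⁻ s in (ball z 1)ᶜ, ‖f s‖ₑ * ENNReal.ofReal (cutoffInvSq d ‖s - z‖)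
        ≤ ∫⁻ s in (ball z 1)ᶜ, ‖f s‖ₑ := by
          refine setLIntegral_mono' measurableSet_ball.compl fun s hs ↦ ?_
          have hfar : 1 ≤ ‖s - z‖ := by simpa [dist_eq_norm] using hs
          calc ‖f s‖ₑ * ENNReal.ofReal (cutoffInvSq d ‖s - z‖) ≤ ‖f s‖ₑ * ENNReal.ofReal 1 := by
                gcongr; exact cutoffInvSq_le_one hfar
            _ = ‖f s‖ₑ := by rw [ofReal_one, mul_one]
      _ ≤ ∫⁻ s, ‖f s‖ₑ := setLIntegral_le_lintegral _ _
      _ = eLpNorm f 1 volume := eLpNorm_one_eq_lintegral_enorm.symm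

theorem lintegral_div_norm_sub_mul_norm_sub_le {F : Type*} [NormedAddCommGroup F] {f : ℂ → F}
    (hf : AEStronglyMeasurable f) {z₁ z₂ : ℂ} (hz : z₁ ≠ z₂) :
    ∫⁻ s, ENNReal.ofReal (‖f s‖ / (‖s - z₁‖ * ‖s - z₂‖)) ≤
      4 * (ENNReal.ofReal (4 * π * max (-log ‖z₁ - z₂‖) 1) * eLpNorm f ⊤ volume +
        eLpNorm f 1 volume) := by
  set d := ‖z₁ - z₂‖
  have hd : 0 < d := norm_pos_iff.2 (sub_ne_zero.2 hz)
  set k : ℂ → ℂ → ℝ≥0∞ := fun z s ↦ ‖f s‖ₑ * ENNReal.ofReal (cutoffInvSq d ‖s - z‖)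
  have hpt : ∀ s, ENNReal.ofReal (‖f s‖ / (‖s - z₁‖ * ‖s - z₂‖)) ≤ 2 * (k z₁ s + k z₂ s) := by
    intro s
    have htri : d ≤ ‖s - z₁‖ + ‖s - z₂‖ := by
      simpa [norm_sub_rev z₁ s] using norm_sub_le_norm_sub_add_norm_sub z₁ s z₂
    have hkernel := inv_mul_inv_le_cutoffInvSq_add (norm_nonneg _) (norm_nonneg _) hd htri
    calc ENNReal.ofReal (‖f s‖ / (‖s - z₁‖ * ‖s - z₂‖))
        = ‖f s‖ₑ * ENNReal.ofReal ((‖s - z₁‖)⁻¹ * (‖s - z₂‖)⁻¹) := by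
          rw [div_eq_mul_inv, mul_inv, ofReal_mul (norm_nonneg _), ofReal_norm]
      _ ≤ ‖f s‖ₑ * ENNReal.ofReal (2 * (cutoffInvSq d ‖s - z₁‖ + cutoffInvSq d ‖s - z₂‖)) := by
          gcongr
      _ = 2 * (k z₁ s + k z₂ s) := by
          rw [ofReal_mul zero_le_two, ofReal_add (cutoffInvSq_nonneg (norm_nonneg _))
            (cutoffInvSq_nonneg (norm_nonneg _)), ofReal_ofNat]
          ring
  have hk : AEMeasurable (k z₁) := hf.enorm.mul
    ((measurable_cutoffInvSq d).comp (measurable_id.sub_const z₁).norm).ennreal_ofReal.aemeasurable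
  set B := ENNReal.ofReal (4 * π * max (-log d) 1) * eLpNorm f ⊤ volume + eLpNorm f 1 volume
  calc ∫⁻ s, ENNReal.ofReal (‖f s‖ / (‖s - z₁‖ * ‖s - z₂‖))
      ≤ ∫⁻ s, 2 * (k z₁ s + k z₂ s) := lintegral_mono hpt
    _ = 2 * ((∫⁻ s, k z₁ s) + ∫⁻ s, k z₂ s) := by
        rw [lintegral_const_mul' _ _ ofNat_ne_top, lintegral_add_left' hk]
    _ ≤ 2 * (B + B) := by gcongr <;> exact lintegral_enorm_mul_cutoffInvSq_le f _ hd
    _ = 4 * B := by ring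

theorem Itwo_estimate :
    ∃ C > 0, ∀ (z₁ z₂ : ℂ) (f : ℂ → ℝ), z₁ ≠ z₂ → Measurable f →
      MemLp f 1 volume → MemLp f ⊤ volume →
      ENNReal.ofReal (‖z₁ - z₂‖) *
        ∫⁻ s, ENNReal.ofReal (|f s| / (‖s - z₁‖ * ‖s - z₂‖)) ≤
      ENNReal.ofReal (C * ((eLpNorm f 1 volume).toReal + (eLpNorm f ⊤ volume).toReal) *
        phi (‖z₁ - z₂‖)) := by
  refine ⟨16 * π + 4, by positivity, fun z₁ z₂ f hz hf hf₁ hf_top ↦ ?_⟩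
  have key := lintegral_div_norm_sub_mul_norm_sub_le hf.aestronglyMeasurable hz
  simp only [Real.norm_eq_abs] at key
  rw [← ofReal_toReal hf_top.eLpNorm_ne_top, ← ofReal_toReal hf₁.eLpNorm_ne_top] at key
  set d := ‖z₁ - z₂‖
  set L := max (-log d) 1
  set e := (eLpNorm f 1 volume).toReal
  set m := (eLpNorm f ⊤ volume).toReal
  have hd : 0 ≤ d := norm_nonneg _
  have hL : 1 ≤ L := le_max_right _ _
  have he : 0 ≤ e := toReal_nonneg
  have hm : 0 ≤ m := toReal_nonneg
  calc ENNReal.ofReal d * ∫⁻ s, ENNReal.ofReal (|f s| / (‖s - z₁‖ * ‖s - z₂‖))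
      ≤ ENNReal.ofReal d * (4 * (ENNReal.ofReal (4 * π * L) * ENNReal.ofReal m +
          ENNReal.ofReal e)) := by gcongr
    _ = ENNReal.ofReal (d * (4 * (4 * π * L * m + e))) := by
        rw [← ofReal_mul (by positivity), ← ofReal_add (by positivity) he, ← ofReal_ofNat 4,
          ← ofReal_mul (by norm_num), ← ofReal_mul hd]
    _ ≤ ENNReal.ofReal ((16 * π + 4) * (e + m) * phi d) := by
        refine ofReal_le_ofReal ?_
        unfold phi
        nlinarith [mul_nonneg (mul_nonneg he hd) (sub_nonneg.2 hL), mul_nonneg hd hm,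
          mul_nonneg (mul_nonneg hd hm) (by positivity : (0 : ℝ) ≤ L),
          mul_nonneg (mul_nonneg hd he) (by positivity : (0 : ℝ) ≤ π * L)]
end

section
/- Let 0 < ν < 1, z₁, z₂ ∈ ℂ nonzero with z₁ ≠ z₂, and f ∈ L^∞(ℂ) with compact support (or f ∈ L¹ ∩ L^∞). Then |z₁ - z₂| · ∫_ℂ |f(s)| / (|s|^{1-ν} |s - z₁| |s - z₂|) ds ≤ C_ν · ‖f‖_{L^∞} · (1 + min(|z₁|^{ν-1}, |z₂|^{ν-1})) · φ(|z₁ - z₂|), provided f ∈ L¹ ∩ L^∞; here φ(x)=x·max(-ln x, 1). -/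
/-!
Write `d = ‖z₁ - z₂‖` and `m = max ‖z₁‖ ‖z₂‖`, and bound the kernel
`‖s‖ ^ (ν - 1) / (‖s - z₁‖ * ‖s - z₂‖)` region by region. On the disc of radius `d / 2` about
either pole the other factor is at least `d / 2`, which leaves `∫ ‖s‖ ^ (ν - 1) / ‖s - c‖` over a
disc, of size `O(d * m ^ (ν - 1))`. Off both discs `‖s - z₁‖ ≤ 3 * ‖s - z₂‖`, and
`∫_{‖s - z₁‖ ≥ d / 2} ‖s‖ ^ (ν - 1) / ‖s - z₁‖ ^ 2 = O(m ^ (ν - 1) * (1 + log (m / d)))`: the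
logarithm comes from the annulus `d / 2 ≤ ‖s - z₁‖ < 2 * m`, on which `‖s‖` is comparable to `m`
except near the origin. Polar coordinates reduce every piece to a one-variable power integral.
Finally `d * m ^ (ν - 1) * log (m / d) ≤ C * (1 + m ^ (ν - 1)) * phi d`, because
`m ^ (ν - 1) * log m ≤ 1 / (1 - ν)`.
-/

open MeasureTheory

open Set Real Metric
open scoped ENNReal

theorem div_rpow_le_mul_rpow {x a q : ℝ} (hx : 0 ≤ x) (ha : 1 ≤ a) (hq : -1 ≤ q) :
    (x / a) ^ q ≤ a * x ^ q := by
  rw [div_rpow hx (by linarith), div_eq_mul_inv, mul_comm, ← rpow_neg (by linarith)]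
  gcongr
  calc a ^ (-q) ≤ a ^ (1 : ℝ) := rpow_le_rpow_of_exponent_le ha (by linarith)
    _ = a := rpow_one a

theorem rpow_div_le_rpow_sub_one_add {x y q : ℝ} (hx : 0 ≤ x) (hy : 0 ≤ y) (hq : q < 0) :
    x ^ q / y ≤ x ^ (q - 1) + y ^ (q - 1) := by
  rcases hx.eq_or_lt with rfl | hx
  · rw [zero_rpow hq.ne, zero_div]; positivity
  rcases hy.eq_or_lt with rfl | hy
  · rw [div_zero]; positivity
  rcases le_total x y with hxy | hyx
  · calc x ^ q / y ≤ x ^ q / x := by gcongr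
      _ = x ^ (q - 1) := by rw [rpow_sub_one hx.ne']
      _ ≤ x ^ (q - 1) + y ^ (q - 1) := le_add_of_nonneg_right (by positivity)
  · calc x ^ q / y ≤ y ^ q / y :=
          div_le_div_of_nonneg_right (rpow_le_rpow_of_nonpos hy hyx hq.le) hy.le
      _ = y ^ (q - 1) := by rw [rpow_sub_one hy.ne']
      _ ≤ x ^ (q - 1) + y ^ (q - 1) := le_add_of_nonneg_left (by positivity)

theorem rpow_sub_one_mul_log_le {ν m : ℝ} (hν1 : ν < 1) (hm : 0 < m) :
    m ^ (ν - 1) * log m ≤ 1 / (1 - ν) :=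
  calc m ^ (ν - 1) * log m ≤ m ^ (ν - 1) * (m ^ (1 - ν) / (1 - ν)) := by
        gcongr; exact log_le_rpow_div hm.le (by linarith)
    _ = 1 / (1 - ν) := by
        rw [mul_div_assoc', ← rpow_add hm]; norm_num

theorem mul_rpow_mul_one_add_log_le_phi {ν m d : ℝ} (hν1 : ν < 1) (hm : 0 < m) (hd : 0 < d) :
    d * m ^ (ν - 1) * (1 + log (2 * m / d)) ≤
      (3 + 1 / (1 - ν)) * (1 + m ^ (ν - 1)) * phi d := by
  set M := m ^ (ν - 1)
  set L := max (-log d) 1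
  have hL : 1 ≤ L := le_max_right _ _
  have hM : 0 < M := by positivity
  have hk : 0 < 1 / (1 - ν) := one_div_pos.2 (by linarith)
  calc d * M * (1 + log (2 * m / d))
      = d * M * (1 + log 2) + d * (M * log m) + M * (d * -log d) := by
        rw [log_div (by positivity) hd.ne', log_mul two_ne_zero hm.ne']; ring
    _ ≤ d * M * 2 + d * (1 / (1 - ν)) + M * (d * L) := by
        gcongr
        · linarith [log_two_lt_d9]
        · exact rpow_sub_one_mul_log_le hν1 hm
        · exact le_max_left _ _
    _ ≤ (3 + 1 / (1 - ν)) * (1 + M) * (d * L) := by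
        nlinarith [mul_le_mul_of_nonneg_left hL hd.le, mul_pos hk hM, mul_pos hd hM]

theorem min_rpow_eq_max_rpow {a b q : ℝ} (ha : 0 < a) (hb : 0 < b) (hq : q ≤ 0) :
    min (a ^ q) (b ^ q) = max a b ^ q := by
  rcases le_total a b with h | h
  · rw [max_eq_right h, min_eq_right (rpow_le_rpow_of_nonpos ha h hq)]
  · rw [max_eq_left h, min_eq_left (rpow_le_rpow_of_nonpos hb h hq)]

theorem setLIntegral_ofReal_le_mul {α : Type*} [MeasurableSpace α] {μ : Measure α}
    {S T : Set α} (hS : MeasurableSet S) (hST : S ⊆ T) {f g : α → ℝ} {a : ℝ} (ha : 0 ≤ a)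
    (hfg : ∀ x ∈ S, f x ≤ a * g x) :
    ∫⁻ x in S, ENNReal.ofReal (f x) ∂μ ≤ ENNReal.ofReal a * ∫⁻ x in T, ENNReal.ofReal (g x) ∂μ :=
  calc ∫⁻ x in S, ENNReal.ofReal (f x) ∂μ
      ≤ ∫⁻ x in S, ENNReal.ofReal a * ENNReal.ofReal (g x) ∂μ :=
        setLIntegral_mono' hS fun x hx => by
          rw [← ENNReal.ofReal_mul ha]; exact ENNReal.ofReal_le_ofReal (hfg x hx)
    _ = ENNReal.ofReal a * ∫⁻ x in S, ENNReal.ofReal (g x) ∂μ :=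
        lintegral_const_mul' _ _ ENNReal.ofReal_ne_top
    _ ≤ ENNReal.ofReal a * ∫⁻ x in T, ENNReal.ofReal (g x) ∂μ := by
        gcongr

theorem lintegral_Ioo_zero_rpow {q R : ℝ} (hq : -1 < q) (hR : 0 ≤ R) :
    ∫⁻ t in Ioo 0 R, ENNReal.ofReal (t ^ q) = ENNReal.ofReal (R ^ (q + 1) / (q + 1)) := by
  have h := integral_rpow (a := 0) (b := R) (Or.inl hq)
  rw [zero_rpow (by linarith), sub_zero, intervalIntegral.integral_of_le hR] at h
  rw [← h, setLIntegral_congr Ioo_ae_eq_Ioc,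
    ofReal_integral_eq_lintegral_ofReal (intervalIntegral.intervalIntegrable_rpow' hq).1]
  exact (ae_restrict_iff' measurableSet_Ioc).2 (.of_forall fun t ht => rpow_nonneg ht.1.le q)

theorem lintegral_Ioi_rpow {q R : ℝ} (hq : q < -1) (hR : 0 < R) :
    ∫⁻ t in Ioi R, ENNReal.ofReal (t ^ q) = ENNReal.ofReal (-R ^ (q + 1) / (q + 1)) := by
  rw [← integral_Ioi_rpow_of_lt hq hR,
    ofReal_integral_eq_lintegral_ofReal (integrableOn_Ioi_rpow_of_lt hq hR)]
  exact (ae_restrict_iff' measurableSet_Ioi).2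
    (.of_forall fun t ht => rpow_nonneg (hR.trans ht).le q)

theorem lintegral_Ioo_inv {r R : ℝ} (hr : 0 < r) (hrR : r ≤ R) :
    ∫⁻ t in Ioo r R, ENNReal.ofReal t⁻¹ = ENNReal.ofReal (log (R / r)) := by
  have h := integral_inv_of_pos hr (hr.trans_le hrR)
  rw [intervalIntegral.integral_of_le hrR] at h
  rw [← h, setLIntegral_congr Ioo_ae_eq_Ioc, ofReal_integral_eq_lintegral_ofReal]
  · exact (continuousOn_inv₀.mono fun t ht => (hr.trans_le ht.1).ne').integrableOn_Icc.mono_set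
      Ioc_subset_Icc_self
  · exact (ae_restrict_iff' measurableSet_Ioc).2
      (.of_forall fun t ht => inv_nonneg.2 (hr.trans ht.1).le)

theorem lintegral_comp_norm_sub (c : ℂ) {g : ℝ → ℝ≥0∞} (hg : Measurable g) :
    ∫⁻ s : ℂ, g ‖s - c‖ = ENNReal.ofReal (2 * π) * ∫⁻ t in Ioi 0, ENNReal.ofReal t * g t := by
  rw [lintegral_sub_right_eq_self (fun s : ℂ => g ‖s‖) c,
    ← Complex.lintegral_comp_polarCoord_symm, polarCoord_target]
  have hpolar : ∀ p ∈ Ioi (0 : ℝ) ×ˢ Ioo (-π) π,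
      ENNReal.ofReal p.1 • g ‖Complex.polarCoord.symm p‖ = ENNReal.ofReal p.1 * g p.1 := by
    rintro p ⟨hp, -⟩
    simp [abs_of_pos (mem_Ioi.mp hp)]
  rw [setLIntegral_congr_fun (measurableSet_Ioi.prod measurableSet_Ioo) hpolar,
    Measure.volume_eq_prod, setLIntegral_prod _ (by fun_prop)]
  simp only [lintegral_const, Measure.restrict_apply MeasurableSet.univ, univ_inter,
    Real.volume_Ioo, sub_neg_eq_add, ← two_mul]
  rw [lintegral_mul_const _ (by fun_prop), mul_comm]

theorem setLIntegral_preimage_norm_sub_rpow (c : ℂ) {I : Set ℝ} (hI : MeasurableSet I) (p : ℝ) :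
    ∫⁻ s in (‖· - c‖) ⁻¹' I, ENNReal.ofReal (‖s - c‖ ^ p) =
      ENNReal.ofReal (2 * π) * ∫⁻ t in I ∩ Ioi 0, ENNReal.ofReal (t ^ (p + 1)) := by
  set g : ℝ → ℝ≥0∞ := fun t => ENNReal.ofReal (t ^ p)
  have hg : Measurable (I.indicator g) := (Measurable.ennreal_ofReal (by fun_prop)).indicator hI
  rw [← lintegral_indicator (hI.preimage (by fun_prop)),
    show ((‖· - c‖) ⁻¹' I).indicator (fun s => g ‖s - c‖) = fun s => I.indicator g ‖s - c‖ from
      funext fun s => indicator_comp_right (f := (‖· - c‖)) (g := g) (x := s),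
    lintegral_comp_norm_sub c hg, ← Measure.restrict_restrict hI, ← lintegral_indicator hI]
  congr 1
  refine setLIntegral_congr_fun measurableSet_Ioi fun t (ht : 0 < t) => ?_
  by_cases htI : t ∈ I
  · simp [g, htI, ← ENNReal.ofReal_mul ht.le, rpow_add ht, mul_comm]
  · simp [htI]

theorem setLIntegral_ball_norm_sub_rpow (c : ℂ) {p R : ℝ} (hp : -2 < p) (hR : 0 ≤ R) :
    ∫⁻ s in ball c R, ENNReal.ofReal (‖s - c‖ ^ p) =
      ENNReal.ofReal (2 * π * (R ^ (p + 2) / (p + 2))) := by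
  rw [show ball c R = (‖· - c‖) ⁻¹' Iio R by ext; simp [dist_eq_norm],
    setLIntegral_preimage_norm_sub_rpow c measurableSet_Iio, Iio_inter_Ioi,
    lintegral_Ioo_zero_rpow (by linarith) hR, ← ENNReal.ofReal_mul (by positivity)]
  ring_nf

theorem setLIntegral_compl_ball_norm_sub_rpow (c : ℂ) {p R : ℝ} (hp : p < -2) (hR : 0 < R) :
    ∫⁻ s in (ball c R)ᶜ, ENNReal.ofReal (‖s - c‖ ^ p) =
      ENNReal.ofReal (2 * π * (-R ^ (p + 2) / (p + 2))) := by
  rw [show (ball c R)ᶜ = (‖· - c‖) ⁻¹' Ici R by ext; simp [dist_eq_norm],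
    setLIntegral_preimage_norm_sub_rpow c measurableSet_Ici,
    inter_eq_left.2 (Ici_subset_Ioi.2 hR), setLIntegral_congr Ioi_ae_eq_Ici.symm,
    lintegral_Ioi_rpow (by linarith) hR, ← ENNReal.ofReal_mul (by positivity)]
  ring_nf

theorem setLIntegral_ball_diff_ball_norm_sub_rpow_neg_two (c : ℂ) {r R : ℝ} (hr : 0 < r)
    (hrR : r ≤ R) :
    ∫⁻ s in ball c R \ ball c r, ENNReal.ofReal (‖s - c‖ ^ (-2 : ℝ)) =
      ENNReal.ofReal (2 * π * log (R / r)) := by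
  rw [show ball c R \ ball c r = (‖· - c‖) ⁻¹' Ico r R by ext; simp [dist_eq_norm, and_comm],
    setLIntegral_preimage_norm_sub_rpow c measurableSet_Ico,
    inter_eq_left.2 (show Ico r R ⊆ Ioi 0 from fun t ht => hr.trans_le ht.1),
    setLIntegral_congr Ioo_ae_eq_Ico.symm, show (-2 : ℝ) + 1 = -1 by norm_num]
  simp_rw [rpow_neg_one]
  rw [lintegral_Ioo_inv hr hrR, ← ENNReal.ofReal_mul (by positivity)]

section Weighted

variable {ν : ℝ}

theorem setLIntegral_ball_rpow_div_norm_sub_le_of_norm_le (hν0 : 0 < ν) (hν1 : ν < 1) {c : ℂ}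
    {r : ℝ} (hr : 0 < r) (hc : ‖c‖ ≤ 2 * r) :
    ∫⁻ s in ball c r, ENNReal.ofReal (‖s‖ ^ (ν - 1) / ‖s - c‖) ≤
      ENNReal.ofReal (8 * π / ν * r ^ ν) := by
  have hsub : ball c r ⊆ ball 0 (3 * r) := fun s hs => by
    rw [mem_ball_iff_norm] at hs
    rw [mem_ball_zero_iff]
    linarith [norm_le_norm_add_norm_sub' s c]
  calc ∫⁻ s in ball c r, ENNReal.ofReal (‖s‖ ^ (ν - 1) / ‖s - c‖)
      ≤ ∫⁻ s in ball c r,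
          (ENNReal.ofReal (‖s - 0‖ ^ (ν - 2)) + ENNReal.ofReal (‖s - c‖ ^ (ν - 2))) := by
        refine lintegral_mono fun s => ?_
        rw [← ENNReal.ofReal_add (by positivity) (by positivity), sub_zero,
          show ν - 2 = ν - 1 - 1 by ring]
        exact ENNReal.ofReal_le_ofReal
          (rpow_div_le_rpow_sub_one_add (norm_nonneg _) (norm_nonneg _) (by linarith))
    _ ≤ (∫⁻ s in ball (0 : ℂ) (3 * r), ENNReal.ofReal (‖s - 0‖ ^ (ν - 2))) +
          ∫⁻ s in ball c r, ENNReal.ofReal (‖s - c‖ ^ (ν - 2)) := by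
        rw [lintegral_add_left (by fun_prop)]
        exact add_le_add (lintegral_mono_set hsub) le_rfl
    _ = ENNReal.ofReal (2 * π * ((3 * r) ^ ν / ν) + 2 * π * (r ^ ν / ν)) := by
        rw [setLIntegral_ball_norm_sub_rpow 0 (by linarith : -2 < ν - 2) (by positivity),
          setLIntegral_ball_norm_sub_rpow c (by linarith : -2 < ν - 2) hr.le,
          show ν - 2 + 2 = ν by ring, ← ENNReal.ofReal_add (by positivity) (by positivity)]
    _ ≤ ENNReal.ofReal (8 * π / ν * r ^ ν) := by
        refine ENNReal.ofReal_le_ofReal ?_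
        have h3 : (3 : ℝ) ^ ν ≤ 3 := by
          simpa using rpow_le_rpow_of_exponent_le (by norm_num : (1 : ℝ) ≤ 3) hν1.le
        rw [mul_rpow (by norm_num) hr.le]
        have : 0 ≤ π / ν * r ^ ν := by positivity
        calc 2 * π * (3 ^ ν * r ^ ν / ν) + 2 * π * (r ^ ν / ν)
            = (2 * 3 ^ ν + 2) * (π / ν * r ^ ν) := by ring
          _ ≤ 8 * (π / ν * r ^ ν) := by gcongr; linarith
          _ = 8 * π / ν * r ^ ν := by ring

theorem setLIntegral_ball_rpow_div_norm_sub_le_of_lt_norm (hν0 : 0 ≤ ν) (hν1 : ν ≤ 1) {c : ℂ}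
    {r : ℝ} (hr : 0 < r) (hc : 2 * r < ‖c‖) :
    ∫⁻ s in ball c r, ENNReal.ofReal (‖s‖ ^ (ν - 1) / ‖s - c‖) ≤
      ENNReal.ofReal (4 * π * r * ‖c‖ ^ (ν - 1)) := by
  have hpt : ∀ s ∈ ball c r,
      ‖s‖ ^ (ν - 1) / ‖s - c‖ ≤ 2 * ‖c‖ ^ (ν - 1) * ‖s - c‖ ^ (-1 : ℝ) := by
    intro s hs
    rw [mem_ball_iff_norm] at hs
    have hs0 : ‖c‖ / 2 ≤ ‖s‖ := by linarith [norm_le_norm_add_norm_sub' c s, norm_sub_rev s c]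
    rw [rpow_neg_one, div_eq_mul_inv]
    gcongr
    calc ‖s‖ ^ (ν - 1) ≤ (‖c‖ / 2) ^ (ν - 1) :=
          rpow_le_rpow_of_nonpos (by linarith) hs0 (by linarith)
      _ ≤ 2 * ‖c‖ ^ (ν - 1) := div_rpow_le_mul_rpow (norm_nonneg _) one_le_two (by linarith)
  calc ∫⁻ s in ball c r, ENNReal.ofReal (‖s‖ ^ (ν - 1) / ‖s - c‖)
      ≤ ENNReal.ofReal (2 * ‖c‖ ^ (ν - 1)) *
          ∫⁻ s in ball c r, ENNReal.ofReal (‖s - c‖ ^ (-1 : ℝ)) :=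
        setLIntegral_ofReal_le_mul measurableSet_ball subset_rfl (by positivity) hpt
    _ = ENNReal.ofReal (4 * π * r * ‖c‖ ^ (ν - 1)) := by
        rw [setLIntegral_ball_norm_sub_rpow _ (by norm_num) hr.le,
          show (-1 : ℝ) + 2 = 1 by norm_num, rpow_one, div_one,
          ← ENNReal.ofReal_mul (by positivity)]
        ring_nf

theorem setLIntegral_ball_rpow_div_norm_sub_le (hν0 : 0 < ν) (hν1 : ν < 1) (c : ℂ) {r : ℝ}
    (hr : 0 < r) :
    ∫⁻ s in ball c r, ENNReal.ofReal (‖s‖ ^ (ν - 1) / ‖s - c‖) ≤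
      ENNReal.ofReal (16 * π / ν * r * max r ‖c‖ ^ (ν - 1)) := by
  rcases le_or_gt ‖c‖ (2 * r) with hc | hc
  · refine (setLIntegral_ball_rpow_div_norm_sub_le_of_norm_le hν0 hν1 hr hc).trans
      (ENNReal.ofReal_le_ofReal ?_)
    have hmax : r ^ (ν - 1) ≤ 2 * max r ‖c‖ ^ (ν - 1) :=
      calc r ^ (ν - 1) = (2 * r / 2) ^ (ν - 1) := by ring_nf
        _ ≤ 2 * (2 * r) ^ (ν - 1) := div_rpow_le_mul_rpow (by positivity) one_le_two (by linarith)
        _ ≤ 2 * max r ‖c‖ ^ (ν - 1) := by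
          gcongr 2 * ?_
          exact rpow_le_rpow_of_nonpos (by positivity) (max_le (by linarith) hc) (by linarith)
    calc 8 * π / ν * r ^ ν = 8 * π / ν * r * r ^ (ν - 1) := by
          rw [mul_assoc, ← rpow_one_add' hr.le (by linarith)]; ring_nf
      _ ≤ 8 * π / ν * r * (2 * max r ‖c‖ ^ (ν - 1)) := by gcongr
      _ = 16 * π / ν * r * max r ‖c‖ ^ (ν - 1) := by ring
  · refine (setLIntegral_ball_rpow_div_norm_sub_le_of_lt_norm hν0.le hν1.le hr hc).trans
      (ENNReal.ofReal_le_ofReal ?_)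
    rw [max_eq_right (by linarith)]
    have : 4 ≤ 16 / ν := by rw [le_div_iff₀ hν0]; linarith
    calc 4 * π * r * ‖c‖ ^ (ν - 1) = 4 * (π * r * ‖c‖ ^ (ν - 1)) := by ring
      _ ≤ 16 / ν * (π * r * ‖c‖ ^ (ν - 1)) := by gcongr
      _ = 16 * π / ν * r * ‖c‖ ^ (ν - 1) := by ring

theorem setLIntegral_ball_zero_rpow_div_norm_sub_sq_le (hν0 : 0 ≤ ν) {c : ℂ} (hc : c ≠ 0) :
    ∫⁻ s in ball 0 (‖c‖ / 2), ENNReal.ofReal (‖s‖ ^ (ν - 1) / ‖s - c‖ ^ 2) ≤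
      ENNReal.ofReal (8 * π * ‖c‖ ^ (ν - 1)) := by
  have hm : 0 < ‖c‖ := norm_pos_iff.2 hc
  have hpt : ∀ s ∈ ball (0 : ℂ) (‖c‖ / 2),
      ‖s‖ ^ (ν - 1) / ‖s - c‖ ^ 2 ≤ 4 / ‖c‖ ^ 2 * ‖s - 0‖ ^ (ν - 1) := by
    intro s hs
    rw [mem_ball_zero_iff] at hs
    have ht : ‖c‖ / 2 ≤ ‖s - c‖ := by
      linarith [norm_le_norm_add_norm_sub' c s, norm_sub_rev s c]
    calc ‖s‖ ^ (ν - 1) / ‖s - c‖ ^ 2 ≤ ‖s‖ ^ (ν - 1) / (‖c‖ / 2) ^ 2 := by gcongr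
      _ = 4 / ‖c‖ ^ 2 * ‖s - 0‖ ^ (ν - 1) := by rw [sub_zero]; field_simp; ring
  calc ∫⁻ s in ball 0 (‖c‖ / 2), ENNReal.ofReal (‖s‖ ^ (ν - 1) / ‖s - c‖ ^ 2)
      ≤ ENNReal.ofReal (4 / ‖c‖ ^ 2) *
          ∫⁻ s in ball (0 : ℂ) (‖c‖ / 2), ENNReal.ofReal (‖s - 0‖ ^ (ν - 1)) :=
        setLIntegral_ofReal_le_mul measurableSet_ball subset_rfl (by positivity) hpt
    _ = ENNReal.ofReal (4 / ‖c‖ ^ 2 * (2 * π * ((‖c‖ / 2) ^ (ν + 1) / (ν + 1)))) := by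
        rw [setLIntegral_ball_norm_sub_rpow 0 (by linarith) (by positivity),
          show ν - 1 + 2 = ν + 1 by ring, ← ENNReal.ofReal_mul (by positivity)]
    _ ≤ ENNReal.ofReal (8 * π * ‖c‖ ^ (ν - 1)) := by
        refine ENNReal.ofReal_le_ofReal ?_
        have h1 : (‖c‖ / 2) ^ (ν + 1) / (ν + 1) ≤ ‖c‖ ^ (ν - 1) * ‖c‖ ^ 2 := by
          rw [← rpow_natCast, ← rpow_add hm, show ν - 1 + (2 : ℕ) = ν + 1 by push_cast; ring]
          exact (div_le_self (by positivity) (by linarith)).trans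
            (rpow_le_rpow (by positivity) (by linarith) (by linarith))
        calc 4 / ‖c‖ ^ 2 * (2 * π * ((‖c‖ / 2) ^ (ν + 1) / (ν + 1)))
            ≤ 4 / ‖c‖ ^ 2 * (2 * π * (‖c‖ ^ (ν - 1) * ‖c‖ ^ 2)) := by gcongr
          _ = 8 * π * ‖c‖ ^ (ν - 1) := by field_simp; ring

theorem setLIntegral_annulus_rpow_div_norm_sub_sq_le (hν0 : 0 ≤ ν) (hν1 : ν ≤ 1) (c : ℂ)
    {r : ℝ} (hr : 0 < r) (hrc : r ≤ ‖c‖) :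
    ∫⁻ s in (ball 0 (‖c‖ / 2))ᶜ ∩ (ball c (2 * ‖c‖) \ ball c r),
        ENNReal.ofReal (‖s‖ ^ (ν - 1) / ‖s - c‖ ^ 2) ≤
      ENNReal.ofReal (4 * π * ‖c‖ ^ (ν - 1) * (1 + log (‖c‖ / r))) := by
  have hm : 0 < ‖c‖ := hr.trans_le hrc
  have hpt : ∀ s ∈ (ball (0 : ℂ) (‖c‖ / 2))ᶜ ∩ (ball c (2 * ‖c‖) \ ball c r),
      ‖s‖ ^ (ν - 1) / ‖s - c‖ ^ 2 ≤ 2 * ‖c‖ ^ (ν - 1) * ‖s - c‖ ^ (-2 : ℝ) := by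
    rintro s ⟨hs, -⟩
    rw [mem_compl_iff, mem_ball_zero_iff, not_lt] at hs
    rw [rpow_neg (norm_nonneg _), div_eq_mul_inv, show (2 : ℝ) = (2 : ℕ) by rfl, rpow_natCast]
    gcongr
    calc ‖s‖ ^ (ν - 1) ≤ (‖c‖ / 2) ^ (ν - 1) :=
          rpow_le_rpow_of_nonpos (by positivity) hs (by linarith)
      _ ≤ 2 * ‖c‖ ^ (ν - 1) := div_rpow_le_mul_rpow hm.le one_le_two (by linarith)
  calc ∫⁻ s in (ball 0 (‖c‖ / 2))ᶜ ∩ (ball c (2 * ‖c‖) \ ball c r),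
        ENNReal.ofReal (‖s‖ ^ (ν - 1) / ‖s - c‖ ^ 2)
      ≤ ENNReal.ofReal (2 * ‖c‖ ^ (ν - 1)) *
          ∫⁻ s in ball c (2 * ‖c‖) \ ball c r, ENNReal.ofReal (‖s - c‖ ^ (-2 : ℝ)) :=
        setLIntegral_ofReal_le_mul (by measurability) inter_subset_right (by positivity) hpt
    _ = ENNReal.ofReal (2 * ‖c‖ ^ (ν - 1) * (2 * π * log (2 * ‖c‖ / r))) := by
        rw [setLIntegral_ball_diff_ball_norm_sub_rpow_neg_two c hr (by linarith),
          ← ENNReal.ofReal_mul (by positivity)]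
    _ ≤ ENNReal.ofReal (4 * π * ‖c‖ ^ (ν - 1) * (1 + log (‖c‖ / r))) := by
        refine ENNReal.ofReal_le_ofReal ?_
        have hlog : log (2 * ‖c‖ / r) ≤ 1 + log (‖c‖ / r) := by
          rw [mul_div_assoc, log_mul two_ne_zero (div_pos hm hr).ne']
          linarith [log_two_lt_d9]
        calc 2 * ‖c‖ ^ (ν - 1) * (2 * π * log (2 * ‖c‖ / r))
            ≤ 2 * ‖c‖ ^ (ν - 1) * (2 * π * (1 + log (‖c‖ / r))) := by gcongr
          _ = 4 * π * ‖c‖ ^ (ν - 1) * (1 + log (‖c‖ / r)) := by ring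

theorem setLIntegral_compl_ball_two_mul_norm_rpow_div_norm_sub_sq_le (hν0 : 0 ≤ ν)
    (hν1 : ν < 1) {c : ℂ} (hc : c ≠ 0) :
    ∫⁻ s in (ball c (2 * ‖c‖))ᶜ, ENNReal.ofReal (‖s‖ ^ (ν - 1) / ‖s - c‖ ^ 2) ≤
      ENNReal.ofReal (4 * π / (1 - ν) * ‖c‖ ^ (ν - 1)) := by
  have hm : 0 < ‖c‖ := norm_pos_iff.2 hc
  have hpt : ∀ s ∈ (ball c (2 * ‖c‖))ᶜ,
      ‖s‖ ^ (ν - 1) / ‖s - c‖ ^ 2 ≤ 2 * ‖s - c‖ ^ (ν - 3) := by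
    intro s hs
    rw [mem_compl_iff, mem_ball_iff_norm, not_lt] at hs
    have ht : 0 < ‖s - c‖ := by linarith
    have hs0 : ‖s - c‖ / 2 ≤ ‖s‖ := by linarith [norm_sub_le s c]
    have hsq : ‖s - c‖ ^ (ν - 3) = ‖s - c‖ ^ (ν - 1) / ‖s - c‖ ^ 2 := by
      rw [← rpow_natCast, ← rpow_sub ht]; norm_num; ring_nf
    rw [hsq, ← mul_div_assoc]
    gcongr
    calc ‖s‖ ^ (ν - 1) ≤ (‖s - c‖ / 2) ^ (ν - 1) :=
          rpow_le_rpow_of_nonpos (by positivity) hs0 (by linarith)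
      _ ≤ 2 * ‖s - c‖ ^ (ν - 1) := div_rpow_le_mul_rpow ht.le one_le_two (by linarith)
  calc ∫⁻ s in (ball c (2 * ‖c‖))ᶜ, ENNReal.ofReal (‖s‖ ^ (ν - 1) / ‖s - c‖ ^ 2)
      ≤ ENNReal.ofReal 2 * ∫⁻ s in (ball c (2 * ‖c‖))ᶜ, ENNReal.ofReal (‖s - c‖ ^ (ν - 3)) :=
        setLIntegral_ofReal_le_mul measurableSet_ball.compl subset_rfl (by positivity) hpt
    _ = ENNReal.ofReal (2 * (2 * π * (-(2 * ‖c‖) ^ (ν - 1) / (ν - 1)))) := by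
        rw [setLIntegral_compl_ball_norm_sub_rpow c (by linarith) (by positivity),
          show ν - 3 + 2 = ν - 1 by ring, ← ENNReal.ofReal_mul (by positivity)]
    _ ≤ ENNReal.ofReal (4 * π / (1 - ν) * ‖c‖ ^ (ν - 1)) := by
        refine ENNReal.ofReal_le_ofReal ?_
        have h2 : (2 * ‖c‖) ^ (ν - 1) ≤ ‖c‖ ^ (ν - 1) :=
          rpow_le_rpow_of_nonpos hm (by linarith) (by linarith)
        rw [neg_div, ← div_neg, neg_sub]
        calc 2 * (2 * π * ((2 * ‖c‖) ^ (ν - 1) / (1 - ν)))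
            ≤ 2 * (2 * π * (‖c‖ ^ (ν - 1) / (1 - ν))) := by gcongr
          _ = 4 * π / (1 - ν) * ‖c‖ ^ (ν - 1) := by ring

theorem setLIntegral_compl_ball_rpow_div_norm_sub_sq_le (hν0 : 0 ≤ ν) (hν1 : ν < 1) (c : ℂ)
    {r : ℝ} (hr : 0 < r) (hrc : r ≤ ‖c‖) :
    ∫⁻ s in (ball c r)ᶜ, ENNReal.ofReal (‖s‖ ^ (ν - 1) / ‖s - c‖ ^ 2) ≤
      ENNReal.ofReal (16 * π / (1 - ν) * ‖c‖ ^ (ν - 1) * (1 + log (‖c‖ / r))) := by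
  have hc : c ≠ 0 := norm_pos_iff.1 (hr.trans_le hrc)
  have hcover : (ball c r)ᶜ ⊆ ball 0 (‖c‖ / 2) ∪
      ((ball 0 (‖c‖ / 2))ᶜ ∩ (ball c (2 * ‖c‖) \ ball c r)) ∪ (ball c (2 * ‖c‖))ᶜ := by
    intro s hs
    by_cases h₀ : s ∈ ball (0 : ℂ) (‖c‖ / 2) <;> by_cases h₂ : s ∈ ball c (2 * ‖c‖) <;> simp_all
  have hL : 0 ≤ log (‖c‖ / r) := log_nonneg ((one_le_div hr).2 hrc)
  have hk : 1 ≤ 1 / (1 - ν) := by rw [le_div_iff₀ (by linarith)]; linarith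
  calc ∫⁻ s in (ball c r)ᶜ, ENNReal.ofReal (‖s‖ ^ (ν - 1) / ‖s - c‖ ^ 2)
      ≤ ENNReal.ofReal (8 * π * ‖c‖ ^ (ν - 1)) +
          ENNReal.ofReal (4 * π * ‖c‖ ^ (ν - 1) * (1 + log (‖c‖ / r))) +
          ENNReal.ofReal (4 * π / (1 - ν) * ‖c‖ ^ (ν - 1)) :=
        (lintegral_mono_set hcover).trans <| (lintegral_union_le _ _ _).trans <|
          add_le_add ((lintegral_union_le _ _ _).trans <| add_le_add
            (setLIntegral_ball_zero_rpow_div_norm_sub_sq_le hν0 hc)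
            (setLIntegral_annulus_rpow_div_norm_sub_sq_le hν0 hν1.le c hr hrc))
          (setLIntegral_compl_ball_two_mul_norm_rpow_div_norm_sub_sq_le hν0 hν1 hc)
    _ ≤ ENNReal.ofReal (16 * π / (1 - ν) * ‖c‖ ^ (ν - 1) * (1 + log (‖c‖ / r))) := by
        rw [← ENNReal.ofReal_add (by positivity) (by positivity),
          ← ENNReal.ofReal_add (by positivity) (by positivity)]
        refine ENNReal.ofReal_le_ofReal ?_
        have : 0 ≤ π * ‖c‖ ^ (ν - 1) *
            (12 * (1 / (1 - ν) - 1) + 4 * log (‖c‖ / r) * (4 * (1 / (1 - ν)) - 1)) := by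
          have : 0 ≤ 1 / (1 - ν) - 1 := by linarith
          have : 0 ≤ 4 * (1 / (1 - ν)) - 1 := by linarith
          positivity
        linear_combination this

end Weighted

noncomputable def twoPoleKernel (ν : ℝ) (z₁ z₂ s : ℂ) : ℝ :=
  ‖s‖ ^ (ν - 1) / (‖s - z₁‖ * ‖s - z₂‖)

theorem twoPoleKernel_comm (ν : ℝ) (z₁ z₂ : ℂ) : twoPoleKernel ν z₁ z₂ = twoPoleKernel ν z₂ z₁ :=
  funext fun s => by rw [twoPoleKernel, twoPoleKernel, mul_comm ‖s - z₁‖]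

section TwoPoleKernel

variable {ν : ℝ} (hν0 : 0 < ν) (hν1 : ν < 1)
include hν0 hν1

theorem setLIntegral_ball_twoPoleKernel_le {c c' : ℂ} (hcc' : c ≠ c') :
    ∫⁻ s in ball c (‖c - c'‖ / 2), ENNReal.ofReal (twoPoleKernel ν c c' s) ≤
      ENNReal.ofReal (16 * π / ν * max (‖c - c'‖ / 2) ‖c‖ ^ (ν - 1)) := by
  set d := ‖c - c'‖
  have hd : 0 < d := norm_pos_iff.2 (sub_ne_zero.2 hcc')
  have hpt : ∀ s ∈ ball c (d / 2),
      twoPoleKernel ν c c' s ≤ 2 / d * (‖s‖ ^ (ν - 1) / ‖s - c‖) := by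
    intro s hs
    rw [mem_ball_iff_norm] at hs
    have h' : d / 2 ≤ ‖s - c'‖ := by
      linarith [norm_sub_le_norm_sub_add_norm_sub c s c', norm_sub_rev c s]
    calc twoPoleKernel ν c c' s ≤ ‖s‖ ^ (ν - 1) / (‖s - c‖ * (d / 2)) := by
          rw [twoPoleKernel]
          rcases (norm_nonneg (s - c)).eq_or_lt with h0 | h0
          · rw [← h0]; simp
          · gcongr
      _ = 2 / d * (‖s‖ ^ (ν - 1) / ‖s - c‖) := by field_simp
  calc ∫⁻ s in ball c (d / 2), ENNReal.ofReal (twoPoleKernel ν c c' s)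
      ≤ ENNReal.ofReal (2 / d) *
          ∫⁻ s in ball c (d / 2), ENNReal.ofReal (‖s‖ ^ (ν - 1) / ‖s - c‖) :=
        setLIntegral_ofReal_le_mul measurableSet_ball subset_rfl (by positivity) hpt
    _ ≤ ENNReal.ofReal (2 / d) *
          ENNReal.ofReal (16 * π / ν * (d / 2) * max (d / 2) ‖c‖ ^ (ν - 1)) := by
        gcongr; exact setLIntegral_ball_rpow_div_norm_sub_le hν0 hν1 c (by positivity)
    _ = ENNReal.ofReal (16 * π / ν * max (d / 2) ‖c‖ ^ (ν - 1)) := by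
        rw [← ENNReal.ofReal_mul (by positivity)]
        congr 1
        field_simp

theorem setLIntegral_compl_union_ball_twoPoleKernel_le {z₁ z₂ : ℂ} (hne : z₁ ≠ z₂)
    (h : ‖z₂‖ ≤ ‖z₁‖) :
    ∫⁻ s in (ball z₁ (‖z₁ - z₂‖ / 2) ∪ ball z₂ (‖z₁ - z₂‖ / 2))ᶜ,
        ENNReal.ofReal (twoPoleKernel ν z₁ z₂ s) ≤
      ENNReal.ofReal (48 * π / (1 - ν) * ‖z₁‖ ^ (ν - 1) *
        (1 + log (2 * ‖z₁‖ / ‖z₁ - z₂‖))) := by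
  set d := ‖z₁ - z₂‖
  have hd : 0 < d := norm_pos_iff.2 (sub_ne_zero.2 hne)
  have hdm : d / 2 ≤ ‖z₁‖ := by linarith [norm_sub_le z₁ z₂]
  have hpt : ∀ s ∈ (ball z₁ (d / 2) ∪ ball z₂ (d / 2))ᶜ,
      twoPoleKernel ν z₁ z₂ s ≤ 3 * (‖s‖ ^ (ν - 1) / ‖s - z₁‖ ^ 2) := by
    intro s hs
    simp only [compl_union, mem_inter_iff, mem_compl_iff, mem_ball_iff_norm, not_lt] at hs
    have h₃ : ‖s - z₁‖ / 3 ≤ ‖s - z₂‖ := by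
      linarith [norm_sub_le_norm_sub_add_norm_sub s z₂ z₁, norm_sub_rev z₂ z₁]
    have ht : 0 < ‖s - z₁‖ := by linarith
    calc twoPoleKernel ν z₁ z₂ s ≤ ‖s‖ ^ (ν - 1) / (‖s - z₁‖ * (‖s - z₁‖ / 3)) :=
          div_le_div_of_nonneg_left (by positivity) (by positivity) (by gcongr)
      _ = 3 * (‖s‖ ^ (ν - 1) / ‖s - z₁‖ ^ 2) := by field_simp
  calc _ ≤ ENNReal.ofReal 3 *
        ∫⁻ s in (ball z₁ (d / 2))ᶜ, ENNReal.ofReal (‖s‖ ^ (ν - 1) / ‖s - z₁‖ ^ 2) :=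
        setLIntegral_ofReal_le_mul (by measurability) (compl_subset_compl.2 subset_union_left)
          (by norm_num) hpt
    _ ≤ ENNReal.ofReal 3 *
        ENNReal.ofReal (16 * π / (1 - ν) * ‖z₁‖ ^ (ν - 1) * (1 + log (‖z₁‖ / (d / 2)))) := by
        gcongr
        exact setLIntegral_compl_ball_rpow_div_norm_sub_sq_le hν0.le hν1 z₁ (by positivity) hdm
    _ = _ := by
        rw [← ENNReal.ofReal_mul (by norm_num), div_div_eq_mul_div, mul_comm ‖z₁‖ 2]
        ring_nf

theorem setLIntegral_ball_union_ball_twoPoleKernel_le {z₁ z₂ : ℂ} (hne : z₁ ≠ z₂)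
    (h : ‖z₂‖ ≤ ‖z₁‖) :
    ∫⁻ s in ball z₁ (‖z₁ - z₂‖ / 2) ∪ ball z₂ (‖z₁ - z₂‖ / 2),
        ENNReal.ofReal (twoPoleKernel ν z₁ z₂ s) ≤
      ENNReal.ofReal (64 * π / ν * ‖z₁‖ ^ (ν - 1)) := by
  set d := ‖z₁ - z₂‖
  set m := ‖z₁‖
  have hm : 0 < m := by linarith [norm_sub_le z₁ z₂, norm_pos_iff.2 (sub_ne_zero.2 hne)]
  have hnear₁ : ∫⁻ s in ball z₁ (d / 2), ENNReal.ofReal (twoPoleKernel ν z₁ z₂ s) ≤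
      ENNReal.ofReal (16 * π / ν * m ^ (ν - 1)) :=
    (setLIntegral_ball_twoPoleKernel_le hν0 hν1 hne).trans <| ENNReal.ofReal_le_ofReal <|
      mul_le_mul_of_nonneg_left (rpow_le_rpow_of_nonpos hm (le_max_right _ _) (by linarith))
        (by positivity)
  have hmax : m / 3 ≤ max (d / 2) ‖z₂‖ := by
    have : m ≤ ‖z₂‖ + d := by linarith [norm_le_norm_add_norm_sub' z₁ z₂]
    rcases le_total (m / 3) ‖z₂‖ with h' | h'
    · exact h'.trans (le_max_right _ _)
    · exact le_trans (by linarith) (le_max_left _ _)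
  have hnear₂ : ∫⁻ s in ball z₂ (d / 2), ENNReal.ofReal (twoPoleKernel ν z₁ z₂ s) ≤
      ENNReal.ofReal (48 * π / ν * m ^ (ν - 1)) := by
    rw [twoPoleKernel_comm, show d = ‖z₂ - z₁‖ from norm_sub_rev _ _]
    refine (setLIntegral_ball_twoPoleKernel_le hν0 hν1 hne.symm).trans
      (ENNReal.ofReal_le_ofReal ?_)
    rw [← norm_sub_rev z₁ z₂]
    calc 16 * π / ν * max (d / 2) ‖z₂‖ ^ (ν - 1) ≤ 16 * π / ν * (m / 3) ^ (ν - 1) :=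
          mul_le_mul_of_nonneg_left
            (rpow_le_rpow_of_nonpos (by positivity) hmax (by linarith)) (by positivity)
      _ ≤ 16 * π / ν * (3 * m ^ (ν - 1)) := by
          gcongr; exact div_rpow_le_mul_rpow hm.le (by norm_num) (by linarith)
      _ = 48 * π / ν * m ^ (ν - 1) := by ring
  calc _ ≤ ENNReal.ofReal (16 * π / ν * m ^ (ν - 1)) +
        ENNReal.ofReal (48 * π / ν * m ^ (ν - 1)) :=
        (lintegral_union_le _ _ _).trans (add_le_add hnear₁ hnear₂)
    _ = ENNReal.ofReal (64 * π / ν * m ^ (ν - 1)) := by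
        rw [← ENNReal.ofReal_add (by positivity) (by positivity)]; ring_nf

theorem lintegral_twoPoleKernel_le {z₁ z₂ : ℂ} (hne : z₁ ≠ z₂) (h : ‖z₂‖ ≤ ‖z₁‖) :
    ∫⁻ s, ENNReal.ofReal (twoPoleKernel ν z₁ z₂ s) ≤
      ENNReal.ofReal ((64 * π / ν + 48 * π / (1 - ν)) * ‖z₁‖ ^ (ν - 1) *
        (1 + log (2 * ‖z₁‖ / ‖z₁ - z₂‖))) := by
  have hd : 0 < ‖z₁ - z₂‖ := norm_pos_iff.2 (sub_ne_zero.2 hne)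
  have hL : 0 ≤ log (2 * ‖z₁‖ / ‖z₁ - z₂‖) :=
    log_nonneg ((one_le_div hd).2 (by linarith [norm_sub_le z₁ z₂]))
  calc ∫⁻ s, ENNReal.ofReal (twoPoleKernel ν z₁ z₂ s)
      ≤ ENNReal.ofReal (64 * π / ν * ‖z₁‖ ^ (ν - 1)) +
          ENNReal.ofReal (48 * π / (1 - ν) * ‖z₁‖ ^ (ν - 1) *
            (1 + log (2 * ‖z₁‖ / ‖z₁ - z₂‖))) := by
        rw [← lintegral_add_compl _ (measurableSet_ball.union measurableSet_ball)]
        exact add_le_add (setLIntegral_ball_union_ball_twoPoleKernel_le hν0 hν1 hne h)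
          (setLIntegral_compl_union_ball_twoPoleKernel_le hν0 hν1 hne h)
    _ ≤ _ := by
        rw [← ENNReal.ofReal_add (by positivity) (by positivity)]
        refine ENNReal.ofReal_le_ofReal ?_
        have : 0 ≤ 64 * π / ν * ‖z₁‖ ^ (ν - 1) * log (2 * ‖z₁‖ / ‖z₁ - z₂‖) := by positivity
        linear_combination this

theorem ofReal_mul_lintegral_twoPoleKernel_le {z₁ z₂ : ℂ} (hne : z₁ ≠ z₂) :
    ENNReal.ofReal ‖z₁ - z₂‖ * ∫⁻ s, ENNReal.ofReal (twoPoleKernel ν z₁ z₂ s) ≤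
      ENNReal.ofReal ((64 * π / ν + 48 * π / (1 - ν)) * (3 + 1 / (1 - ν)) *
        (1 + max ‖z₁‖ ‖z₂‖ ^ (ν - 1)) * phi ‖z₁ - z₂‖) := by
  wlog h : ‖z₂‖ ≤ ‖z₁‖ generalizing z₁ z₂
  · simpa only [norm_sub_rev z₂ z₁, max_comm ‖z₂‖, twoPoleKernel_comm ν z₂ z₁] using
      this hne.symm (le_of_not_ge h)
  have hd : 0 < ‖z₁ - z₂‖ := norm_pos_iff.2 (sub_ne_zero.2 hne)
  have hm : 0 < ‖z₁‖ := by linarith [norm_sub_le z₁ z₂]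
  have hK : 0 < 64 * π / ν + 48 * π / (1 - ν) := by
    have : 0 < 1 - ν := by linarith
    positivity
  calc ENNReal.ofReal ‖z₁ - z₂‖ * ∫⁻ s, ENNReal.ofReal (twoPoleKernel ν z₁ z₂ s)
      ≤ ENNReal.ofReal ‖z₁ - z₂‖ * ENNReal.ofReal ((64 * π / ν + 48 * π / (1 - ν)) *
          ‖z₁‖ ^ (ν - 1) * (1 + log (2 * ‖z₁‖ / ‖z₁ - z₂‖))) := by
        gcongr; exact lintegral_twoPoleKernel_le hν0 hν1 hne h
    _ = ENNReal.ofReal ((64 * π / ν + 48 * π / (1 - ν)) *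
          (‖z₁ - z₂‖ * ‖z₁‖ ^ (ν - 1) * (1 + log (2 * ‖z₁‖ / ‖z₁ - z₂‖)))) := by
        rw [← ENNReal.ofReal_mul hd.le]; ring_nf
    _ ≤ ENNReal.ofReal ((64 * π / ν + 48 * π / (1 - ν)) *
          ((3 + 1 / (1 - ν)) * (1 + ‖z₁‖ ^ (ν - 1)) * phi ‖z₁ - z₂‖)) :=
        ENNReal.ofReal_le_ofReal
          (mul_le_mul_of_nonneg_left (mul_rpow_mul_one_add_log_le_phi hν1 hm hd) hK.le)
    _ = _ := by rw [max_eq_left h]; ring_nf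

end TwoPoleKernel

theorem lintegral_abs_div_le_mul_lintegral_twoPoleKernel {f : ℂ → ℝ} {M : ℝ} (hM : 0 ≤ M)
    (hf : ∀ᵐ s, |f s| ≤ M) (ν : ℝ) (z₁ z₂ : ℂ) :
    ∫⁻ s, ENNReal.ofReal (|f s| / (‖s‖ ^ (1 - ν) * ‖s - z₁‖ * ‖s - z₂‖)) ≤
      ENNReal.ofReal M * ∫⁻ s, ENNReal.ofReal (twoPoleKernel ν z₁ z₂ s) := by
  rw [← lintegral_const_mul' _ _ ENNReal.ofReal_ne_top]
  refine lintegral_mono_ae (hf.mono fun s hs => ?_)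
  rw [← ENNReal.ofReal_mul hM]
  refine ENNReal.ofReal_le_ofReal ?_
  calc |f s| / (‖s‖ ^ (1 - ν) * ‖s - z₁‖ * ‖s - z₂‖) = |f s| * twoPoleKernel ν z₁ z₂ s := by
        rw [twoPoleKernel, show 1 - ν = -(ν - 1) by ring, rpow_neg (norm_nonneg _)]
        simp only [div_eq_mul_inv, mul_inv, inv_inv]
        ring
    _ ≤ M * twoPoleKernel ν z₁ z₂ s := by gcongr; rw [twoPoleKernel]; positivity

theorem Ithree_estimate_second (ν : ℝ) (hν0 : 0 < ν) (hν1 : ν < 1) :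
    ∃ C > 0, ∀ (z₁ z₂ : ℂ) (f : ℂ → ℝ), z₁ ≠ 0 → z₂ ≠ 0 → z₁ ≠ z₂ → Measurable f →
      MemLp f 1 volume → MemLp f ⊤ volume →
      ENNReal.ofReal ‖z₁ - z₂‖ *
        ∫⁻ s, ENNReal.ofReal (|f s| /
          (‖s‖ ^ (1 - ν) * ‖s - z₁‖ * ‖s - z₂‖)) ≤
      ENNReal.ofReal (C * (eLpNorm f ⊤ volume).toReal *
        (1 + min (‖z₁‖ ^ (ν - 1)) (‖z₂‖ ^ (ν - 1))) *
        phi ‖z₁ - z₂‖) := by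
  have hν1' : 0 < 1 - ν := by linarith
  refine ⟨(64 * π / ν + 48 * π / (1 - ν)) * (3 + 1 / (1 - ν)), by positivity, ?_⟩
  intro z₁ z₂ f hz₁ hz₂ hne _ _ hf
  rw [toReal_eLpNorm hf.1,
    min_rpow_eq_max_rpow (norm_pos_iff.2 hz₁) (norm_pos_iff.2 hz₂) (by linarith)]
  have hfM : ∀ᵐ s, |f s| ≤ lpNorm f ⊤ volume := by
    simpa only [Real.norm_eq_abs] using ae_le_lpNorm_exponent_top hf
  calc ENNReal.ofReal ‖z₁ - z₂‖ *
        ∫⁻ s, ENNReal.ofReal (|f s| / (‖s‖ ^ (1 - ν) * ‖s - z₁‖ * ‖s - z₂‖))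
      ≤ ENNReal.ofReal (lpNorm f ⊤ volume) *
          (ENNReal.ofReal ‖z₁ - z₂‖ * ∫⁻ s, ENNReal.ofReal (twoPoleKernel ν z₁ z₂ s)) := by
        rw [mul_left_comm]
        gcongr
        exact lintegral_abs_div_le_mul_lintegral_twoPoleKernel lpNorm_nonneg hfM ν z₁ z₂
    _ ≤ _ := by
        grw [ofReal_mul_lintegral_twoPoleKernel_le hν0 hν1 hne,
          ← ENNReal.ofReal_mul lpNorm_nonneg]
        exact le_of_eq (congrArg ENNReal.ofReal (by ring))
end

section
/- For 1/2 < ν < 1 and 0 < ε ≤ 1, with Ψ_ε(z) = (z^{1/ν} - iε)/(1 + ε² + iε z^{1/ν}) and Ψ_ε⁻¹(w) = (w/(1 - iεw) + iε)^ν, the inverse derivative satisfies |(Ψ_ε)_z(Ψ_ε⁻¹(w))|^{-2} ≤ C_ν · |w + iε|^{2ν - 2} for all w in the upper half plane ℍ, where C_ν depends only on ν. -/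
/-- The Riemann map Ψ_ε from Ω_ε onto the upper half plane. -/
noncomputable def PsiEps (ν ε : ℝ) (z : ℂ) : ℂ :=
  (z ^ ((1/(ν:ℂ))) - Complex.I * ε) / (1 + (ε:ℂ)^2 + Complex.I * ε * z ^ ((1/(ν:ℂ))))

/-- The inverse map Ψ_ε⁻¹(w) = (w/(1 - iεw) + iε)^ν. -/
noncomputable def PsiEpsInv (ν ε : ℝ) (w : ℂ) : ℂ :=
  (w / (1 - Complex.I * ε * w) + Complex.I * ε) ^ ((ν : ℂ))

/-! Ψ_ε is the Möbius map M(ζ) = (ζ - iε)/(1 + ε² + iεζ) composed with z ↦ z^{1/ν}, and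
M'(ζ) = (1 + ε² + iεζ)⁻². At ζ = M⁻¹(w) = ((1 + ε²)w + iε)/(1 - iεw) the denominator
1 + ε² + iεζ equals (1 - iεw)⁻¹, so
|Ψ_ε'(Ψ_ε⁻¹ w)| = |1 - iεw|² · ν⁻¹ · |ζ|^{1-ν} = ν⁻¹ |1 - iεw|^{1+ν} |(1 + ε²)w + iε|^{1-ν}.
On ℍ we have |1 - iεw| ≥ 1 and |(1 + ε²)w + iε| ≥ |w + iε|, and ν⁻¹ ≥ 1, so this is at least
|w + iε|^{1-ν}; raising to the power -2 gives the bound with C_ν = 1. -/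

open Complex

namespace Complex

theorem norm_le_norm_of_abs_re_le_of_abs_im_le {z w : ℂ} (hre : |z.re| ≤ |w.re|)
    (him : |z.im| ≤ |w.im|) : ‖z‖ ≤ ‖w‖ := by
  rw [norm_def, norm_def, normSq_apply, normSq_apply, ← abs_mul_abs_self z.re,
    ← abs_mul_abs_self z.im, ← abs_mul_abs_self w.re, ← abs_mul_abs_self w.im]
  gcongr

/-- For `0 < ν ≤ 1` the principal branches invert each other on all of `ℂ`, since
`ν * arg u` stays in `(-π, π]`. -/
theorem cpow_ofReal_cpow_one_div {ν : ℝ} (hν0 : 0 < ν) (hν1 : ν ≤ 1) (u : ℂ) :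
    (u ^ (ν : ℂ)) ^ (1 / (ν : ℂ)) = u := by
  have hlog : (log u * ν).im = u.arg * ν := by simp [log_im]
  rw [← cpow_mul _ (by rw [hlog]; nlinarith [neg_pi_lt_arg u, Real.pi_pos])
    (by rw [hlog]; nlinarith [arg_le_pi u, Real.pi_pos]),
    mul_one_div_cancel (ofReal_ne_zero.mpr hν0.ne'), cpow_one]

theorem cpow_ofReal_mem_slitPlane {u : ℂ} (hu : u ≠ 0) {ν : ℝ} (hν0 : 0 < ν) (hν1 : ν < 1) :
    u ^ (ν : ℂ) ∈ slitPlane := by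
  have hlog : (log u * ν).im = u.arg * ν := by simp [log_im]
  have hlt : u.arg * ν < Real.pi := by nlinarith [arg_le_pi u, Real.pi_pos]
  rw [cpow_def_of_ne_zero hu, exp_mem_slitPlane, hlog, (toIocMod_eq_self _).2
    ⟨by nlinarith [neg_pi_lt_arg u, Real.pi_pos], by linarith⟩]
  exact hlt.ne

end Complex

section UpperHalfPlane

variable {ε : ℝ} (hε : 0 ≤ ε) {w : ℂ}
include hε

theorem one_le_norm_one_sub_I_mul (hw : 0 ≤ w.im) : 1 ≤ ‖1 - I * ε * w‖ :=
  calc (1 : ℝ) ≤ |1 + ε * w.im| := by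
        rw [abs_of_nonneg (by positivity)]
        exact le_add_of_nonneg_right (by positivity)
    _ = |(1 - I * ε * w).re| := by simp
    _ ≤ _ := abs_re_le_norm _

theorem norm_add_I_mul_pos (hw : 0 < w.im) : 0 < ‖w + I * ε‖ :=
  norm_pos_iff.mpr fun h ↦ by
    have := congrArg im h
    simp only [add_im, mul_im, I_re, I_im, ofReal_re, ofReal_im, zero_im] at this
    linarith

theorem norm_add_I_mul_le_norm (hw : 0 ≤ w.im) :
    ‖w + I * ε‖ ≤ ‖(1 + (ε : ℂ) ^ 2) * w + I * ε‖ := by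
  apply norm_le_norm_of_abs_re_le_of_abs_im_le <;> simp only [← ofReal_pow, add_re, add_im,
    mul_re, mul_im, one_re, one_im, ofReal_re, ofReal_im, I_re, I_im, zero_mul, add_zero,
    sub_zero, mul_zero, zero_add]
  · rw [abs_mul, abs_of_pos (by positivity : 0 < 1 + ε ^ 2)]
    exact le_mul_of_one_le_left (abs_nonneg _) (le_add_of_nonneg_right (sq_nonneg ε))
  · rw [abs_of_nonneg (by positivity), abs_of_nonneg (by positivity)]
    nlinarith [mul_nonneg (sq_nonneg ε) hw]

end UpperHalfPlane

noncomputable def mobiusEps (ε : ℝ) (ζ : ℂ) : ℂ :=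
  (ζ - I * ε) / (1 + (ε : ℂ) ^ 2 + I * ε * ζ)

noncomputable def mobiusEpsInv (ε : ℝ) (w : ℂ) : ℂ :=
  w / (1 - I * ε * w) + I * ε

theorem PsiEpsInv_eq (ν ε : ℝ) (w : ℂ) : PsiEpsInv ν ε w = mobiusEpsInv ε w ^ (ν : ℂ) := rfl

theorem hasDerivAt_mobiusEps (ε : ℝ) {ζ : ℂ} (h : 1 + (ε : ℂ) ^ 2 + I * ε * ζ ≠ 0) :
    HasDerivAt (mobiusEps ε) ((1 + (ε : ℂ) ^ 2 + I * ε * ζ) ^ 2)⁻¹ ζ := by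
  refine (((hasDerivAt_id' ζ).sub_const (I * ε)).div
    (((hasDerivAt_id' ζ).const_mul (I * ε)).const_add (1 + (ε : ℂ) ^ 2)) h).congr_deriv ?_
  rw [inv_eq_one_div]
  congr 1
  linear_combination (ε : ℂ) ^ 2 * I_sq

section Inverse

variable {ε : ℝ} {w : ℂ} (h : 1 - I * ε * w ≠ 0)
include h

theorem mobiusEpsInv_mul : mobiusEpsInv ε w * (1 - I * ε * w) = (1 + (ε : ℂ) ^ 2) * w + I * ε := by
  rw [mobiusEpsInv, add_mul, div_mul_cancel₀ w h]
  linear_combination (-w * (ε : ℂ) ^ 2) * I_sq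

theorem mobiusEps_denom_mobiusEpsInv :
    1 + (ε : ℂ) ^ 2 + I * ε * mobiusEpsInv ε w = (1 - I * ε * w)⁻¹ := by
  apply eq_inv_of_mul_eq_one_left
  linear_combination I * ε * mobiusEpsInv_mul h + (ε : ℂ) ^ 2 * I_sq

end Inverse

section Derivative

variable {ν ε : ℝ} (hν0 : 0 < ν) (hν1 : ν < 1) {w : ℂ}
include hν0 hν1

theorem hasDerivAt_PsiEps_PsiEpsInv (hB : 1 - I * ε * w ≠ 0) (hu : mobiusEpsInv ε w ≠ 0) :
    HasDerivAt (PsiEps ν ε)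
      ((1 - I * ε * w) ^ 2 * (1 / ν * PsiEpsInv ν ε w ^ (1 / (ν : ℂ) - 1)))
      (PsiEpsInv ν ε w) := by
  have hroot : PsiEpsInv ν ε w ^ (1 / (ν : ℂ)) = mobiusEpsInv ε w :=
    cpow_ofReal_cpow_one_div hν0 hν1.le _
  have hM := hasDerivAt_mobiusEps ε (ζ := mobiusEpsInv ε w)
    (by rw [mobiusEps_denom_mobiusEpsInv hB]; exact inv_ne_zero hB)
  rw [mobiusEps_denom_mobiusEpsInv hB, inv_pow, inv_inv, ← hroot] at hM
  have hpow : HasDerivAt (fun z : ℂ ↦ z ^ (1 / (ν : ℂ)))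
      (1 / ν * PsiEpsInv ν ε w ^ (1 / (ν : ℂ) - 1)) (PsiEpsInv ν ε w) :=
    (hasStrictDerivAt_cpow_const (cpow_ofReal_mem_slitPlane hu hν0 hν1)).hasDerivAt
  exact hM.comp (PsiEpsInv ν ε w) hpow

theorem norm_deriv_PsiEps_PsiEpsInv (hB : 1 - I * ε * w ≠ 0) (hu : mobiusEpsInv ε w ≠ 0) :
    ‖deriv (PsiEps ν ε) (PsiEpsInv ν ε w)‖ =
      ‖1 - I * ε * w‖ ^ 2 * (ν⁻¹ * ‖mobiusEpsInv ε w‖ ^ (1 - ν)) := by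
  have hexp : 1 / (ν : ℂ) - 1 = ((1 / ν - 1 : ℝ) : ℂ) := by push_cast; ring
  rw [(hasDerivAt_PsiEps_PsiEpsInv hν0 hν1 hB hu).deriv, norm_mul, norm_pow, norm_mul, hexp,
    norm_cpow_real, PsiEpsInv_eq, norm_cpow_real, ← Real.rpow_mul (norm_nonneg _),
    mul_sub, mul_one_div_cancel hν0.ne', mul_one, norm_div, norm_one, norm_real,
    Real.norm_of_nonneg hν0.le, one_div]

theorem norm_add_I_mul_rpow_le_norm_deriv_PsiEps (hε : 0 ≤ ε) (hw : 0 < w.im) :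
    ‖w + I * ε‖ ^ (1 - ν) ≤ ‖deriv (PsiEps ν ε) (PsiEpsInv ν ε w)‖ := by
  set B := 1 - I * ε * w
  set N := (1 + (ε : ℂ) ^ 2) * w + I * ε
  have hB1 : 1 ≤ ‖B‖ := one_le_norm_one_sub_I_mul hε hw.le
  have hB : B ≠ 0 := norm_pos_iff.mp (one_pos.trans_le hB1)
  have hW := norm_add_I_mul_pos hε hw
  have hWN : ‖w + I * ε‖ ≤ ‖N‖ := norm_add_I_mul_le_norm hε hw.le
  have hN : N ≠ 0 := norm_pos_iff.mp (hW.trans_le hWN)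
  have hu : mobiusEpsInv ε w = N / B := (eq_div_iff hB).2 (mobiusEpsInv_mul hB)
  rw [norm_deriv_PsiEps_PsiEpsInv hν0 hν1 hB (hu ▸ div_ne_zero hN hB), hu, norm_div,
    Real.div_rpow (norm_nonneg _) (norm_nonneg _)]
  calc ‖w + I * ε‖ ^ (1 - ν) ≤ ‖N‖ ^ (1 - ν) := Real.rpow_le_rpow hW.le hWN (by linarith)
    _ = ‖B‖ ^ (1 - ν) * (1 * (‖N‖ ^ (1 - ν) / ‖B‖ ^ (1 - ν))) := by field_simp
    _ ≤ ‖B‖ ^ 2 * (ν⁻¹ * (‖N‖ ^ (1 - ν) / ‖B‖ ^ (1 - ν))) := by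
      gcongr
      · rw [← Real.rpow_natCast]
        exact Real.rpow_le_rpow_of_exponent_le hB1 (by norm_num; linarith)
      · exact one_le_inv₀ hν0 |>.mpr hν1.le

end Derivative

theorem PsiEps_inv_deriv_bound (ν : ℝ) (hν1 : 1/2 < ν) (hν2 : ν < 1) :
    ∃ C > 0, ∀ ε : ℝ, 0 < ε → ε ≤ 1 → ∀ w : ℂ, 0 < w.im →
      ‖deriv (PsiEps ν ε) (PsiEpsInv ν ε w)‖ ^ (-2 : ℝ) ≤
        C * ‖w + Complex.I * ε‖ ^ (2*ν - 2) := by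
  refine ⟨1, one_pos, fun ε hε _ w hw ↦ ?_⟩
  have hW := norm_add_I_mul_pos hε.le hw
  calc ‖deriv (PsiEps ν ε) (PsiEpsInv ν ε w)‖ ^ (-2 : ℝ)
      ≤ (‖w + I * ε‖ ^ (1 - ν)) ^ (-2 : ℝ) :=
        Real.rpow_le_rpow_of_nonpos (Real.rpow_pos_of_pos hW _)
          (norm_add_I_mul_rpow_le_norm_deriv_PsiEps (by linarith) hν2 hε.le hw) (by norm_num)
    _ = 1 * ‖w + I * ε‖ ^ (2 * ν - 2) := by
        rw [← Real.rpow_mul hW.le, one_mul]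
        ring_nf
end

section
/- Let 1/2 < ν < 1, ε ∈ (0,1), and let Y : [0,T] → closure(ℍ₊) be continuously differentiable with Y(0) = y ∈ ℍ₊ and suppose Re(dY/dt) ≥ ((b₀ - ε)/ν²)·|Re Y(t)|^{2-2ν} on [0,T] for some b₀ > ε. If Re(Y(0)) ≥ 0 then for all t ∈ [0,T]: |Y(t)| ≥ Re(Y(t)) ≥ [ (2ν-1)(b₀-ε) t / ν² ]^{1/(2ν-1)}. -/
/-!
Separation of variables. If `g' ≥ c |g| ^ (1 - p)` with `g > 0`, then
`(g ^ p)' = p g ^ (p - 1) g' ≥ p c`, so `g ^ p - p c t` is nondecreasing and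
`g t ^ p ≥ g 0 ^ p + p c t ≥ p c t`. Here `g = Re Y` and `p = 2ν - 1`.
-/

open Set

lemma monotoneOn_Icc_of_hasDerivAt_nonneg {f f' : ℝ → ℝ} {a b : ℝ}
    (hf : ∀ t ∈ Icc a b, HasDerivAt f (f' t) t) (hf' : ∀ t ∈ Icc a b, 0 ≤ f' t) :
    MonotoneOn f (Icc a b) :=
  monotoneOn_of_hasDerivWithinAt_nonneg (convex_Icc a b)
    (fun t ht => (hf t ht).continuousAt.continuousWithinAt)
    (fun t ht => (hf t (interior_subset ht)).hasDerivWithinAt)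
    (fun t ht => hf' t (interior_subset ht))

section SeparationOfVariables

variable {g g' : ℝ → ℝ} {p c a b : ℝ}

lemma rpow_sub_mul_monotoneOn_of_le_deriv (hp : 0 < p)
    (hg : ∀ t ∈ Icc a b, HasDerivAt g (g' t) t) (hpos : ∀ t ∈ Icc a b, 0 < g t)
    (hineq : ∀ t ∈ Icc a b, c * |g t| ^ (1 - p) ≤ g' t) :
    MonotoneOn (fun t => g t ^ p - p * c * t) (Icc a b) := by
  refine monotoneOn_Icc_of_hasDerivAt_nonneg (f' := fun t => g' t * p * g t ^ (p - 1) - p * c)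
    (fun t ht => ((hg t ht).rpow_const (Or.inl (hpos t ht).ne')).sub
      (by simpa using (hasDerivAt_id t).const_mul (p * c))) (fun t ht => ?_)
  have hgt := hpos t ht
  have hcancel : g t ^ (1 - p) * g t ^ (p - 1) = 1 := by
    rw [← Real.rpow_add hgt, show 1 - p + (p - 1) = 0 by ring, Real.rpow_zero]
  have hderiv_ge : p * c ≤ g' t * p * g t ^ (p - 1) :=
    calc p * c = c * g t ^ (1 - p) * p * g t ^ (p - 1) := by
          linear_combination (-(c * p)) * hcancel
      _ ≤ g' t * p * g t ^ (p - 1) := by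
          gcongr
          simpa only [abs_of_pos hgt] using hineq t ht
  simpa only [sub_nonneg] using hderiv_ge

theorem mul_rpow_one_div_le_of_le_deriv (hp : 0 < p) (hc : 0 ≤ c)
    (hg : ∀ t ∈ Icc a b, HasDerivAt g (g' t) t) (hga : 0 < g a)
    (hineq : ∀ t ∈ Icc a b, c * |g t| ^ (1 - p) ≤ g' t) :
    ∀ t ∈ Icc a b, (p * c * (t - a)) ^ (1 / p) ≤ g t := by
  intro t ht
  have ha : a ∈ Icc a b := ⟨le_rfl, ht.1.trans ht.2⟩
  have hpos : ∀ s ∈ Icc a b, 0 < g s := fun s hs =>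
    hga.trans_le <| monotoneOn_Icc_of_hasDerivAt_nonneg hg
      (fun s hs => (by positivity : 0 ≤ c * |g s| ^ (1 - p)).trans (hineq s hs)) ha hs hs.1
  have hmono := rpow_sub_mul_monotoneOn_of_le_deriv hp hg hpos hineq ha ht ht.1
  have hga_pow : 0 ≤ g a ^ p := Real.rpow_nonneg hga.le p
  rw [one_div, Real.rpow_inv_le_iff_of_pos (by have := ht.1; positivity) (hpos t ht).le hp]
  simp only at hmono
  linarith

end SeparationOfVariables

theorem flow_moves_right_general (ν ε b₀ T : ℝ) (hν1 : 1/2 < ν)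
    (hb : ε < b₀)
    (Y Y' : ℝ → ℂ)
    (hderiv : ∀ t ∈ Icc (0:ℝ) T, HasDerivAt Y (Y' t) t)
    (hY0 : 0 < (Y 0).re ∧ 0 < (Y 0).im)
    (hineq : ∀ t ∈ Icc (0:ℝ) T,
      ((b₀ - ε) / ν^2) * |(Y t).re| ^ (2 - 2*ν) ≤ (Y' t).re) :
    ∀ t ∈ Icc (0:ℝ) T,
      ((2*ν - 1) * (b₀ - ε) * t / ν^2) ^ ((1:ℝ)/(2*ν - 1)) ≤ (Y t).re ∧
      (Y t).re ≤ ‖Y t‖ := by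
  intro t ht
  have hre : ∀ s ∈ Icc 0 T, HasDerivAt (fun s => (Y s).re) (Y' s).re s := fun s hs =>
    Complex.reCLM.hasFDerivAt.comp_hasDerivAt s (hderiv s hs)
  have hexp : 2 - 2 * ν = 1 - (2 * ν - 1) := by ring
  have hc : 0 ≤ (b₀ - ε) / ν ^ 2 := div_nonneg (by linarith) (sq_nonneg ν)
  refine ⟨?_, Complex.re_le_norm (Y t)⟩
  convert mul_rpow_one_div_le_of_le_deriv (p := 2 * ν - 1) (by linarith) hc hre hY0.1
    (by simpa only [hexp] using hineq) t ht using 2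
  ring

theorem flow_moves_right (ν ε b₀ T : ℝ) (hν1 : 1/2 < ν) (hν2 : ν < 1)
    (hε1 : 0 < ε) (hε2 : ε < 1) (hb : ε < b₀) (hT : 0 < T)
    (Y Y' : ℝ → ℂ)
    (hderiv : ∀ t ∈ Icc (0:ℝ) T, HasDerivAt Y (Y' t) t)
    (hcont : ContinuousOn Y' (Icc 0 T))
    (hrange : ∀ t ∈ Icc (0:ℝ) T, 0 ≤ (Y t).re ∧ 0 ≤ (Y t).im)
    (hY0 : 0 < (Y 0).re ∧ 0 < (Y 0).im)
    (hineq : ∀ t ∈ Icc (0:ℝ) T,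
      ((b₀ - ε) / ν^2) * |(Y t).re| ^ (2 - 2*ν) ≤ (Y' t).re) :
    ∀ t ∈ Icc (0:ℝ) T,
      ((2*ν - 1) * (b₀ - ε) * t / ν^2) ^ ((1:ℝ)/(2*ν - 1)) ≤ (Y t).re ∧
      (Y t).re ≤ ‖Y t‖ :=
  flow_moves_right_general ν ε b₀ T hν1 hb Y Y' hderiv hY0 hineq
end

section
/- Let 0 ≤ r ≤ d/2 where d = |z₁ - z₂| > 0 for distinct z₁, z₂ ∈ ℂ, let α₁, α₂ > 0, and let f ∈ L^∞(ℂ). Then ∫_{A(r)} |f(s)| / (|s-z₁|^{α₁}|s-z₂|^{α₂}) ds ≤ C_{α₁,α₂} [ ‖f‖_∞ ( (∫_r^{d/2} x^{1-α₁} dx) |z₁-z₂|^{-α₂} + (∫_r^{d/2} x^{1-α₂} dx) |z₁-z₂|^{-α₁} ) + ∫_{A(d/2)} |f(s)|/|s - z₁|^{α₁+α₂} ds ], where A(ρ) = {s : |s - z₁| ≥ ρ and |s - z₂| ≥ ρ}. -/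
/-!
Split `A(r)` into the two annuli `r ≤ ‖s - zᵢ‖ < d/2` and the far region `A(d/2)`. On the annulus
around `z₁` the other singularity is at distance at least `d/2`, so `‖s - z₂‖ ^ (-α₂)` is at most
`(d/2) ^ (-α₂)`, and in polar coordinates `∫ ‖s - z₁‖ ^ (-α₁)` over the annulus is
`2π ∫_r^{d/2} x ^ (1 - α₁) dx`. On the far region `‖s - z₁‖ ≤ 3 ‖s - z₂‖`, so the weight is at most
`3 ^ α₂ ‖s - z₁‖ ^ (-(α₁ + α₂))`.
-/

open MeasureTheory Set Real

lemma Complex.lintegral_comp_norm {g : ℝ → ENNReal} (hg : Measurable g) :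
    ∫⁻ w : ℂ, g ‖w‖ = ENNReal.ofReal (2 * π) * ∫⁻ x in Ioi 0, ENNReal.ofReal x * g x := by
  rw [← Complex.lintegral_comp_polarCoord_symm, polarCoord_target,
    Measure.volume_eq_prod, ← Measure.prod_restrict]
  calc _ = ∫⁻ p, ENNReal.ofReal p.1 * g p.1 * 1
        ∂(volume.restrict (Ioi (0:ℝ))).prod (volume.restrict (Ioo (-π) π)) := by
        rw [Measure.prod_restrict]
        refine setLIntegral_congr_fun (measurableSet_Ioi.prod measurableSet_Ioo) fun p hp => ?_
        simp [abs_of_pos (show (0:ℝ) < p.1 from hp.1)]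
    _ = _ := by
      rw [lintegral_prod_mul (f := fun x => ENNReal.ofReal x * g x) (g := fun _ => 1)
        (by fun_prop) aemeasurable_const]
      simp only [lintegral_const, Measure.restrict_apply_univ, Real.volume_Ioo, sub_neg_eq_add,
        ← two_mul, one_mul, mul_comm]

lemma Complex.setLIntegral_comp_norm_sub (z : ℂ) {I : Set ℝ} (hI : MeasurableSet I)
    {g : ℝ → ENNReal} (hg : Measurable g) :
    ∫⁻ s in {s : ℂ | ‖s - z‖ ∈ I}, g ‖s - z‖ =
      ENNReal.ofReal (2 * π) * ∫⁻ x in I ∩ Ioi 0, ENNReal.ofReal x * g x := by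
  have hIs : MeasurableSet {s : ℂ | ‖s - z‖ ∈ I} := by measurability
  rw [← lintegral_indicator hIs]
  calc _ = ∫⁻ s, I.indicator g ‖s - z‖ := rfl
    _ = ∫⁻ w, I.indicator g ‖w‖ := lintegral_sub_right_eq_self (fun w => I.indicator g ‖w‖) z
    _ = _ := by
      rw [Complex.lintegral_comp_norm (hg.indicator hI), ← Measure.restrict_restrict hI,
        ← lintegral_indicator hI]
      simp_rw [indicator_mul_right]

lemma Complex.setLIntegral_annulus_norm_sub_rpow (z : ℂ) (α : ℝ) {r : ℝ} (hr : 0 ≤ r) (R : ℝ) :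
    ∫⁻ s in {s : ℂ | r ≤ ‖s - z‖ ∧ ‖s - z‖ < R}, ENNReal.ofReal (‖s - z‖ ^ (-α)) =
      ENNReal.ofReal (2 * π) * ∫⁻ x in Ioo r R, ENNReal.ofReal (x ^ (1 - α)) := by
  have hIoo : (Ico r R ∩ Ioi 0 : Set ℝ) =ᵐ[volume] Ioo r R := by
    have : Ioo r R ∩ Ioi 0 = Ioo r R := inter_eq_left.2 fun x hx => hr.trans_lt hx.1
    exact this ▸ (Ioo_ae_eq_Ico.symm.inter (ae_eq_refl _))
  refine (Complex.setLIntegral_comp_norm_sub z (measurableSet_Ico (a := r) (b := R))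
    (g := fun x => ENNReal.ofReal (x ^ (-α))) (by fun_prop)).trans ?_
  rw [setLIntegral_congr hIoo]
  congr 1
  refine setLIntegral_congr_fun measurableSet_Ioo fun x hx => ?_
  have hx0 : 0 < x := hr.trans_lt hx.1
  rw [sub_eq_add_neg, Real.rpow_add hx0, Real.rpow_one, ENNReal.ofReal_mul hx0.le]

lemma ofReal_abs_ae_le_eLpNorm_top {X : Type*} [MeasurableSpace X] (f : X → ℝ) (μ : Measure X) :
    ∀ᵐ x ∂μ, ENNReal.ofReal |f x| ≤ eLpNorm f ⊤ μ := by
  simpa only [eLpNorm_exponent_top, Real.enorm_eq_ofReal_abs]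
    using ae_le_eLpNormEssSup (f := f) (μ := μ)

section Triangle

variable {E : Type*} [SeminormedAddCommGroup E] {z w s : E}

lemma half_norm_sub_le_norm_sub_of_lt (h : ‖s - z‖ < ‖z - w‖ / 2) : ‖z - w‖ / 2 ≤ ‖s - w‖ := by
  have := norm_sub_le_norm_sub_add_norm_sub z s w
  rw [norm_sub_rev z s] at this
  linarith

lemma norm_sub_le_three_mul_of_half_le (h : ‖z - w‖ / 2 ≤ ‖s - w‖) : ‖s - z‖ ≤ 3 * ‖s - w‖ := by
  have := norm_sub_le_norm_sub_add_norm_sub s w z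
  rw [norm_sub_rev w z] at this
  linarith

end Triangle

lemma div_rpow_mul_rpow_eq {a b : ℝ} (ha : 0 ≤ a) (hb : 0 ≤ b) (x α β : ℝ) :
    x / (a ^ α * b ^ β) = x * b ^ (-β) * a ^ (-α) := by
  rw [rpow_neg ha, rpow_neg hb, div_eq_mul_inv, mul_inv]
  ring

lemma div_rpow_mul_rpow_le_of_le_mul {x a b c α β : ℝ} (hx : 0 ≤ x) (ha : 0 < a) (hb : 0 < b)
    (hβ : 0 ≤ β) (hab : a ≤ c * b) : x / (a ^ α * b ^ β) ≤ c ^ β * (x / a ^ (α + β)) := by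
  have hc : 0 < c := pos_of_mul_pos_left (ha.trans_le hab) hb.le
  calc x / (a ^ α * b ^ β) = c ^ β * (x / (a ^ α * (c * b) ^ β)) := by
        rw [mul_rpow hc.le hb.le]
        field_simp
    _ ≤ c ^ β * (x / (a ^ α * a ^ β)) := by gcongr
    _ = c ^ β * (x / a ^ (α + β)) := by rw [rpow_add ha]

lemma lintegral_near_pole_le {α β : ℝ} (hβ : 0 ≤ β) (z w : ℂ) (f : ℂ → ℝ) {r : ℝ} (hr : 0 ≤ r) :
    ∫⁻ s in {s : ℂ | r ≤ ‖s - z‖ ∧ ‖s - z‖ < ‖z - w‖ / 2},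
        ENNReal.ofReal (|f s| / (‖s - z‖ ^ α * ‖s - w‖ ^ β)) ≤
      ENNReal.ofReal (2 * π * 2 ^ β) * (eLpNorm f ⊤ volume *
        ((∫⁻ x in Ioo r (‖z - w‖ / 2), ENNReal.ofReal (x ^ (1 - α))) *
          ENNReal.ofReal (‖z - w‖ ^ (-β)))) := by
  have hT : MeasurableSet {s : ℂ | r ≤ ‖s - z‖ ∧ ‖s - z‖ < ‖z - w‖ / 2} := by measurability
  calc _ ≤ ∫⁻ s in {s : ℂ | r ≤ ‖s - z‖ ∧ ‖s - z‖ < ‖z - w‖ / 2},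
        eLpNorm f ⊤ volume * ENNReal.ofReal ((‖z - w‖ / 2) ^ (-β)) *
          ENNReal.ofReal (‖s - z‖ ^ (-α)) := by
        refine lintegral_mono_ae ?_
        filter_upwards [ae_restrict_of_ae (ofReal_abs_ae_le_eLpNorm_top f volume),
          ae_restrict_mem hT] with s hfs hs
        have hzw : 0 < ‖z - w‖ / 2 := (norm_nonneg _).trans_lt hs.2
        rw [div_rpow_mul_rpow_eq (norm_nonneg _) (norm_nonneg _),
          ENNReal.ofReal_mul (by positivity), ENNReal.ofReal_mul (abs_nonneg _)]
        refine mul_le_mul_left (mul_le_mul' hfs (ENNReal.ofReal_le_ofReal ?_)) _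
        exact rpow_le_rpow_of_nonpos hzw (half_norm_sub_le_norm_sub_of_lt hs.2) (neg_nonpos.2 hβ)
    _ = eLpNorm f ⊤ volume * ENNReal.ofReal ((‖z - w‖ / 2) ^ (-β)) *
        (ENNReal.ofReal (2 * π) * ∫⁻ x in Ioo r (‖z - w‖ / 2), ENNReal.ofReal (x ^ (1 - α))) := by
      rw [lintegral_const_mul _ (by fun_prop), Complex.setLIntegral_annulus_norm_sub_rpow z α hr]
    _ = _ := by
      rw [div_rpow (norm_nonneg _) zero_le_two, rpow_neg zero_le_two, div_eq_mul_inv, inv_inv,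
        ENNReal.ofReal_mul (rpow_nonneg (norm_nonneg _) _),
        ENNReal.ofReal_mul (by positivity : (0:ℝ) ≤ 2 * π)]
      ring

lemma lintegral_away_from_poles_le {α₁ α₂ : ℝ} (h₂ : 0 ≤ α₂) {z₁ z₂ : ℂ} (hz : z₁ ≠ z₂)
    (f : ℂ → ℝ) :
    ∫⁻ s in {s : ℂ | ‖z₁ - z₂‖ / 2 ≤ ‖s - z₁‖ ∧ ‖z₁ - z₂‖ / 2 ≤ ‖s - z₂‖},
        ENNReal.ofReal (|f s| / (‖s - z₁‖ ^ α₁ * ‖s - z₂‖ ^ α₂)) ≤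
      ENNReal.ofReal (3 ^ α₂) *
        ∫⁻ s in {s : ℂ | ‖z₁ - z₂‖ / 2 ≤ ‖s - z₁‖ ∧ ‖z₁ - z₂‖ / 2 ≤ ‖s - z₂‖},
          ENNReal.ofReal (|f s| / ‖s - z₁‖ ^ (α₁ + α₂)) := by
  have hd : 0 < ‖z₁ - z₂‖ / 2 := by simpa [sub_eq_zero] using hz
  rw [← lintegral_const_mul' _ _ ENNReal.ofReal_ne_top]
  refine setLIntegral_mono' (by measurability) fun s hs => ?_
  rw [← ENNReal.ofReal_mul (by positivity)]
  exact ENNReal.ofReal_le_ofReal <| div_rpow_mul_rpow_le_of_le_mul (abs_nonneg _)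
    (hd.trans_le hs.1) (hd.trans_le hs.2) h₂ (norm_sub_le_three_mul_of_half_le hs.2)

lemma ofReal_mul_add_mul_add_mul_le {a b c : ℝ} (ha : 0 ≤ a) (hb : 0 ≤ b) (hc : 0 ≤ c)
    (x y z : ENNReal) :
    ENNReal.ofReal a * x + ENNReal.ofReal b * y + ENNReal.ofReal c * z ≤
      ENNReal.ofReal (a + b + c) * (x + y + z) := by
  rw [mul_add, mul_add]
  gcongr <;> linarith

theorem Iest_two_singularities (α₁ α₂ : ℝ) (h₁ : 0 < α₁) (h₂ : 0 < α₂) :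
    ∃ C > 0, ∀ (z₁ z₂ : ℂ) (f : ℂ → ℝ) (r : ℝ), z₁ ≠ z₂ → Measurable f →
      MemLp f ⊤ volume →
      0 ≤ r → r ≤ ‖z₁ - z₂‖ / 2 →
      (∫⁻ s in {s : ℂ | r ≤ ‖s - z₁‖ ∧ r ≤ ‖s - z₂‖},
          ENNReal.ofReal (|f s| / (‖s - z₁‖ ^ α₁ * ‖s - z₂‖ ^ α₂))) ≤
      ENNReal.ofReal C *
        (eLpNorm f ⊤ volume *
            ((∫⁻ x in Set.Ioo r (‖z₁ - z₂‖ / 2), ENNReal.ofReal (x ^ (1 - α₁))) *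
                ENNReal.ofReal (‖z₁ - z₂‖ ^ (-α₂)) +
             (∫⁻ x in Set.Ioo r (‖z₁ - z₂‖ / 2), ENNReal.ofReal (x ^ (1 - α₂))) *
                ENNReal.ofReal (‖z₁ - z₂‖ ^ (-α₁))) +
          ∫⁻ s in {s : ℂ | ‖z₁ - z₂‖ / 2 ≤ ‖s - z₁‖ ∧
              ‖z₁ - z₂‖ / 2 ≤ ‖s - z₂‖},
            ENNReal.ofReal (|f s| / ‖s - z₁‖ ^ (α₁ + α₂))) := by
  refine ⟨2 * π * 2 ^ α₂ + 2 * π * 2 ^ α₁ + 3 ^ α₂, by positivity, ?_⟩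
  intro z₁ z₂ f r hz _ _ hr _
  have hcover : {s : ℂ | r ≤ ‖s - z₁‖ ∧ r ≤ ‖s - z₂‖} ⊆
      {s | r ≤ ‖s - z₁‖ ∧ ‖s - z₁‖ < ‖z₁ - z₂‖ / 2} ∪
        {s | r ≤ ‖s - z₂‖ ∧ ‖s - z₂‖ < ‖z₁ - z₂‖ / 2} ∪
        {s | ‖z₁ - z₂‖ / 2 ≤ ‖s - z₁‖ ∧ ‖z₁ - z₂‖ / 2 ≤ ‖s - z₂‖} := by
    intro s hs
    simp only [mem_union, mem_ofPred_eq] at hs ⊢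
    grind
  have hnear₂ := lintegral_near_pole_le (α := α₂) h₁.le z₂ z₁ f hr
  simp_rw [norm_sub_rev z₂ z₁, mul_comm (‖_ - z₂‖ ^ α₂)] at hnear₂
  calc _ ≤ _ := (lintegral_mono_set hcover).trans <|
        (lintegral_union_le _ _ _).trans (add_le_add_left (lintegral_union_le _ _ _) _)
    _ ≤ _ := add_le_add (add_le_add (lintegral_near_pole_le h₂.le z₁ z₂ f hr) hnear₂)
        (lintegral_away_from_poles_le h₂.le hz f)
    _ ≤ _ := (ofReal_mul_add_mul_add_mul_le (by positivity) (by positivity) (by positivity)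
        _ _ _).trans_eq (by ring)
end
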